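/- arXiv:1305.0965 — 3 statements merged into one kernel-verified Lean document; each statement's English description precedes it below -/
import Mathlib

section
/- Let L be a lattice and let (u1, v1), (u2, v2) be ordered pairs of L (that is, u1 ≤ v1 and u2 ≤ v2). Then the following three conditions are equivalent: (i) cg(u1, v1) ⊆ cg(u2, v2); (ii) the pair (u1, v1) belongs to the congruence cg(u2, v2); (iii) there exist n ∈ ℕ, elements x_0, …, x_n ∈ L, and ordered pairs (y_{ij}, z_{ij}) of L for all i ∈ {1, …, n} and j ∈ {0, …, n}, such that: u1 = x_0 ≤ x_1 ≤ … ≤ x_{n-1} ≤ x_n = v1; y_{i0} = x_{i-1}, z_{i0} = x_i, y_{in} = u2, and z_{in} = v2 for all 1 ≤ i ≤ n; for all i, j ∈ {1, …, n} with j odd, y_{i,j-1} = z_{i,j-1} ⊓ y_{ij} and z_{i,j-1} ≤ z_{ij}; and for all i, j ∈ {1, …, n} with j even, z_{i,j-1} = y_{i,j-1} ⊔ z_{ij} and y_{i,j-1} ≥ y_{ij}. -/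
/-- A lattice congruence: an equivalence relation compatible with meet and join. -/
def IsLatCon {L : Type*} [Lattice L] (r : L → L → Prop) : Prop :=
  Equivalence r ∧
  (∀ a b c d, r a b → r c d → r (a ⊓ c) (b ⊓ d)) ∧
  (∀ a b c d, r a b → r c d → r (a ⊔ c) (b ⊔ d))

/-- The principal congruence generated by the pair `(a, b)`:
the smallest congruence relating `a` and `b`. -/
def cg {L : Type*} [Lattice L] (a b : L) (x y : L) : Prop :=
  ∀ r : L → L → Prop, IsLatCon r → r a b → r x y

/-- The ordered set of principal congruences of `L`, ordered by inclusion. -/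
def Princ (L : Type*) [Lattice L] : Type _ :=
  {θ : L → L → Prop // ∃ a b : L, θ = cg a b}

instance (L : Type*) [Lattice L] : PartialOrder (Princ L) :=
  inferInstanceAs (PartialOrder {θ : L → L → Prop // ∃ a b : L, θ = cg a b})

/-!
Say that `(p, q)` is weakly projective into `(u, v)` in `k` steps when an alternating sequence of
`k` weak perspectivities (up at odd steps, down at even ones) leads from `[p, q]` to `[u, v]`.
Prepending two steps shows that this relation is preserved by `· ⊓ t` and `· ⊔ t`, so the
equivalence it generates is a lattice congruence containing `(u, v)`, hence contains `cg u v`;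
conversely, walking back along the sequence, every congruence collapsing `(u, v)` also
collapses `(p, q)`. A zigzag from `u₁` to `v₁` is straightened into an increasing chain by
joining each term with the previous ones and finally meeting with `v₁`. Chain and sequences are
then brought to one common length `n`, padding with the two-step projectivity
`(c, c) → (c ⊔ u, c ⊔ v) → (u, v)`.
-/

open Relation

section

variable {L : Type*} [Lattice L]

def WeakProjSteps (u v : L) (k : ℕ) (p q : L) : Prop :=
  ∃ y z : ℕ → L, (∀ j ≤ k, y j ≤ z j) ∧ (y 0 = p ∧ z 0 = q ∧ y k = u ∧ z k = v) ∧
    (∀ j, 1 ≤ j → j ≤ k → Odd j → y (j - 1) = z (j - 1) ⊓ y j ∧ z (j - 1) ≤ z j) ∧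
    (∀ j, 1 ≤ j → j ≤ k → Even j → z (j - 1) = y (j - 1) ⊔ z j ∧ y j ≤ y (j - 1))

namespace WeakProjSteps

variable {u v p q : L} {k : ℕ}

theorem le (h : WeakProjSteps u v k p q) : p ≤ q := by
  obtain ⟨y, z, hle, ⟨rfl, rfl, -⟩, -⟩ := h
  exact hle 0 k.zero_le

theorem zero (h : u ≤ v) : WeakProjSteps u v 0 u v :=
  ⟨fun _ ↦ u, fun _ ↦ v, fun _ _ ↦ h, ⟨rfl, rfl, rfl, rfl⟩, by omega, by omega⟩

theorem mono (h : WeakProjSteps u v k p q) {m : ℕ} (hkm : k ≤ m) : WeakProjSteps u v m p q := by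
  obtain ⟨y, z, hle, ⟨hp, hq, hu, hv⟩, hodd, heven⟩ := h
  have huv : u ≤ v := hu ▸ hv ▸ hle k le_rfl
  have hpad : ∀ j, k < j → y (min (j - 1) k) = u ∧ z (min (j - 1) k) = v ∧
      y (min j k) = u ∧ z (min j k) = v := fun j hj ↦ by
    simp only [min_eq_right (show k ≤ j - 1 by omega), min_eq_right hj.le, hu, hv, and_self]
  refine ⟨fun j ↦ y (min j k), fun j ↦ z (min j k), fun j _ ↦ hle _ (min_le_right _ _),
    by simpa [min_eq_right hkm] using ⟨hp, hq, hu, hv⟩, fun j hj1 _ hj ↦ ?_, fun j hj1 _ hj ↦ ?_⟩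
  · rcases le_or_gt j k with hjk | hjk
    · simpa [min_eq_left hjk, min_eq_left (show j - 1 ≤ k by omega)] using hodd j hj1 hjk hj
    · obtain ⟨h1, h2, h3, h4⟩ := hpad j hjk
      simp only [h1, h2, h3, h4, inf_eq_right.mpr huv, le_refl, and_self]
  · rcases le_or_gt j k with hjk | hjk
    · simpa [min_eq_left hjk, min_eq_left (show j - 1 ≤ k by omega)] using heven j hj1 hjk hj
    · obtain ⟨h1, h2, h3, h4⟩ := hpad j hjk
      simp only [h1, h2, h3, h4, sup_eq_right.mpr huv, le_refl, and_self]

theorem cons₂ {p₁ q₁ p' q' : L} (hp : p = q ⊓ p₁) (hq : q ≤ q₁) (hq₁ : q₁ = p₁ ⊔ q')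
    (hp' : p' ≤ p₁) (h : WeakProjSteps u v k p' q') : WeakProjSteps u v (k + 2) p q := by
  obtain ⟨y, z, hle, ⟨rfl, rfl, hu, hv⟩, hodd, heven⟩ := h
  refine ⟨fun | 0 => p | 1 => p₁ | j + 2 => y j, fun | 0 => q | 1 => q₁ | j + 2 => z j,
    fun | 0, _ => hp ▸ inf_le_left | 1, _ => hq₁ ▸ le_sup_left | j + 2, hj => hle j (by omega),
    ⟨rfl, rfl, hu, hv⟩, ?_, ?_⟩
  · rintro (_ | _ | _ | j) hj1 hjk hj
    · omega
    · exact ⟨hp, hq⟩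
    · exact absurd hj (by decide)
    · exact hodd (j + 1) (by omega) (by omega) (by simpa [Nat.odd_add_one] using hj)
  · rintro (_ | _ | _ | j) hj1 hjk hj
    · omega
    · exact absurd hj (by decide)
    · exact ⟨hq₁, hp'⟩
    · exact heven (j + 1) (by omega) (by omega) (by simpa [Nat.even_add_one] using hj)

theorem inf_right (h : WeakProjSteps u v k p q) (t : L) :
    WeakProjSteps u v (k + 2) (p ⊓ t) (q ⊓ t) :=
  cons₂ (by rw [inf_right_comm, inf_eq_right.mpr h.le]) inf_le_left
    (sup_eq_right.mpr h.le).symm le_rfl h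

theorem sup_right (h : WeakProjSteps u v k p q) (t : L) :
    WeakProjSteps u v (k + 2) (p ⊔ t) (q ⊔ t) :=
  cons₂ (inf_eq_right.mpr (sup_le_sup_right h.le t)).symm le_rfl
    (by rw [sup_right_comm, sup_eq_right.mpr h.le]) le_sup_left h

theorem self (h : u ≤ v) (c : L) : WeakProjSteps u v 2 c c :=
  cons₂ inf_sup_self.symm le_sup_left (by rw [sup_assoc, sup_eq_right.mpr h]) le_sup_right
    (zero h)

theorem rel {r : L → L → Prop} (hr : IsLatCon r) (huv : r u v) (h : WeakProjSteps u v k p q) :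
    r p q := by
  obtain ⟨y, z, -, ⟨rfl, rfl, hu, hv⟩, hodd, heven⟩ := h
  obtain ⟨hequiv, hinf, hsup⟩ := hr
  refine Nat.decreasingInduction (motive := fun j _ ↦ r (y j) (z j)) (fun j hj ih ↦ ?_)
    (hu ▸ hv ▸ huv) k.zero_le
  rcases Nat.even_or_odd (j + 1) with he | ho
  · obtain ⟨hz, hy⟩ := Nat.add_sub_cancel j 1 ▸ heven (j + 1) (by omega) hj he
    simpa [← hz, sup_eq_left.mpr hy] using hsup _ _ _ _ (hequiv.refl (y j)) ih
  · obtain ⟨hy, hz⟩ := Nat.add_sub_cancel j 1 ▸ hodd (j + 1) (by omega) hj ho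
    simpa [← hy, inf_eq_left.mpr hz] using hinf _ _ _ _ (hequiv.refl (z j)) ih

end WeakProjSteps

def WeakProj (u v p q : L) : Prop := ∃ k, WeakProjSteps u v k p q

namespace WeakProj

variable {u v p q : L}

theorem le (h : WeakProj u v p q) : p ≤ q := h.elim fun _ hk ↦ hk.le

theorem inf_right (h : WeakProj u v p q) (t : L) : WeakProj u v (p ⊓ t) (q ⊓ t) :=
  h.elim fun k hk ↦ ⟨k + 2, hk.inf_right t⟩

theorem sup_right (h : WeakProj u v p q) (t : L) : WeakProj u v (p ⊔ t) (q ⊔ t) :=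
  h.elim fun k hk ↦ ⟨k + 2, hk.sup_right t⟩

end WeakProj

variable {u v : L}

theorem eqvGen_weakProj_inf_right {a b : L} (h : EqvGen (WeakProj u v) a b) (t : L) :
    EqvGen (WeakProj u v) (a ⊓ t) (b ⊓ t) := by
  rw [← EqvGen.reflTransGen_symmGen] at h ⊢
  exact ReflTransGen.lift (· ⊓ t) (fun _ _ ↦ Or.imp (·.inf_right t) (·.inf_right t)) _ _ h

theorem eqvGen_weakProj_sup_right {a b : L} (h : EqvGen (WeakProj u v) a b) (t : L) :
    EqvGen (WeakProj u v) (a ⊔ t) (b ⊔ t) := by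
  rw [← EqvGen.reflTransGen_symmGen] at h ⊢
  exact ReflTransGen.lift (· ⊔ t) (fun _ _ ↦ Or.imp (·.sup_right t) (·.sup_right t)) _ _ h

theorem isLatCon_eqvGen_weakProj : IsLatCon (EqvGen (WeakProj u v)) := by
  have e := EqvGen.is_equivalence (WeakProj u v)
  refine ⟨e, fun a b c d hab hcd ↦ e.trans (eqvGen_weakProj_inf_right hab c) ?_,
    fun a b c d hab hcd ↦ e.trans (eqvGen_weakProj_sup_right hab c) ?_⟩
  · simpa only [inf_comm b] using eqvGen_weakProj_inf_right hcd b
  · simpa only [sup_comm b] using eqvGen_weakProj_sup_right hcd b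

theorem exists_le_reflTransGen_of_eqvGen {a b : L} (h : EqvGen (WeakProj u v) a b) :
    ∃ d, b ≤ d ∧ ReflTransGen (WeakProj u v) a d := by
  rw [← EqvGen.reflTransGen_symmGen] at h
  induction h with
  | refl => exact ⟨a, le_rfl, .refl⟩
  | @tail b c _ hbc ih =>
    obtain ⟨d, hbd, had⟩ := ih
    rcases hbc with hbc | hcb
    · have hdc : ReflTransGen (WeakProj u v) (b ⊔ d) (c ⊔ d) := .single (hbc.sup_right d)
      rw [sup_eq_right.mpr hbd] at hdc
      exact ⟨c ⊔ d, le_sup_left, had.trans hdc⟩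
    · exact ⟨d, hcb.le.trans hbd, had⟩

theorem cg_of_reflTransGen_weakProj {a b : L} (h : ReflTransGen (WeakProj u v) a b) :
    cg u v a b := fun r hr huv ↦ by
  induction h with
  | refl => exact hr.1.refl _
  | tail _ hbc ih => exact hr.1.trans ih (hbc.elim fun _ hk ↦ hk.rel hr huv)

theorem reflTransGen_weakProj_of_cg {a b : L} (hab : a ≤ b) (huv : u ≤ v) (h : cg u v a b) :
    ReflTransGen (WeakProj u v) a b := by
  obtain ⟨d, hbd, had⟩ := exists_le_reflTransGen_of_eqvGen
    (h _ isLatCon_eqvGen_weakProj (.rel _ _ ⟨0, .zero huv⟩))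
  have hb : ReflTransGen (WeakProj u v) (a ⊓ b) (d ⊓ b) :=
    ReflTransGen.lift (· ⊓ b) (fun _ _ h ↦ h.inf_right b) _ _ had
  rwa [inf_eq_left.mpr hab, inf_eq_right.mpr hbd] at hb

theorem exists_weakProjSteps_chain_of_reflTransGen (huv : u ≤ v) {a b : L}
    (h : ReflTransGen (WeakProj u v) a b) : ∃ N, ∀ n ≥ N, ∃ x : ℕ → L,
      x 0 = a ∧ x n = b ∧ ∀ i < n, WeakProjSteps u v n (x i) (x (i + 1)) := by
  induction h using ReflTransGen.head_induction_on with
  | refl =>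
    exact ⟨2, fun n hn ↦ ⟨fun _ ↦ b, rfl, rfl, fun _ _ ↦ (WeakProjSteps.self huv b).mono hn⟩⟩
  | @head a c hac _ ih =>
    obtain ⟨k, hk⟩ := hac
    obtain ⟨N, hN⟩ := ih
    refine ⟨max (N + 1) k, fun n hn ↦ ?_⟩
    obtain ⟨m, rfl⟩ : ∃ m, n = m + 1 := ⟨n - 1, by omega⟩
    obtain ⟨x, hx0, hxm, hx⟩ := hN m (by omega)
    refine ⟨fun | 0 => a | i + 1 => x i, rfl, hxm, fun | 0, _ => ?_ | i + 1, hi => ?_⟩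
    · simpa [hx0] using hk.mono (show k ≤ m + 1 by omega)
    · simpa using (hx i (by omega)).mono m.le_succ

theorem reflTransGen_weakProj_iff_exists_chain (huv : u ≤ v) {a b : L} :
    ReflTransGen (WeakProj u v) a b ↔ ∃ (n : ℕ) (x : ℕ → L),
      x 0 = a ∧ x n = b ∧ ∀ i < n, WeakProjSteps u v n (x i) (x (i + 1)) := by
  refine ⟨fun h ↦ ?_, fun ⟨n, x, hx0, hxn, hx⟩ ↦ ?_⟩
  · obtain ⟨N, hN⟩ := exists_weakProjSteps_chain_of_reflTransGen huv h
    exact ⟨N, hN N le_rfl⟩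
  · have := reflTransGen_of_succ_of_le (fun i j ↦ WeakProj u v (x i) (x j))
      (fun i hi ↦ ⟨n, by simpa using hx i hi.2⟩) n.zero_le
    exact hx0 ▸ hxn ▸ ReflTransGen.lift x (fun _ _ ↦ id) _ _ this

theorem exists_weakProjSteps_chain_iff_rows {u v a b : L} :
    (∃ (n : ℕ) (x : ℕ → L), x 0 = a ∧ x n = b ∧ ∀ i < n, WeakProjSteps u v n (x i) (x (i + 1))) ↔
      ∃ (n : ℕ) (x : ℕ → L) (y z : ℕ → ℕ → L),
        x 0 = a ∧ x n = b ∧ (∀ i < n, x i ≤ x (i + 1)) ∧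
        (∀ i, 1 ≤ i → i ≤ n → ∀ j ≤ n, y i j ≤ z i j) ∧
        (∀ i, 1 ≤ i → i ≤ n →
          y i 0 = x (i - 1) ∧ z i 0 = x i ∧ y i n = u ∧ z i n = v) ∧
        (∀ i, 1 ≤ i → i ≤ n → ∀ j, 1 ≤ j → j ≤ n → Odd j →
          y i (j - 1) = z i (j - 1) ⊓ y i j ∧ z i (j - 1) ≤ z i j) ∧
        (∀ i, 1 ≤ i → i ≤ n → ∀ j, 1 ≤ j → j ≤ n → Even j →
          z i (j - 1) = y i (j - 1) ⊔ z i j ∧ y i j ≤ y i (j - 1)) := by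
  constructor
  · rintro ⟨n, x, hx0, hxn, hx⟩
    have hrow : ∀ i, ∃ y z : ℕ → L, 1 ≤ i → i ≤ n → (∀ j ≤ n, y j ≤ z j) ∧
        (y 0 = x (i - 1) ∧ z 0 = x i ∧ y n = u ∧ z n = v) ∧
        (∀ j, 1 ≤ j → j ≤ n → Odd j → y (j - 1) = z (j - 1) ⊓ y j ∧ z (j - 1) ≤ z j) ∧
        (∀ j, 1 ≤ j → j ≤ n → Even j → z (j - 1) = y (j - 1) ⊔ z j ∧ y j ≤ y (j - 1)) := by
      rintro (_ | i)
      · exact ⟨x, x, by omega⟩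
      · by_cases hi : i < n
        · obtain ⟨y, z, h⟩ := hx i hi
          exact ⟨y, z, fun _ _ ↦ h⟩
        · exact ⟨x, x, by omega⟩
    choose y z hyz using hrow
    exact ⟨n, x, y, z, hx0, hxn, fun i hi ↦ (hx i hi).le, fun i h1 h2 ↦ (hyz i h1 h2).1,
      fun i h1 h2 ↦ (hyz i h1 h2).2.1, fun i h1 h2 ↦ (hyz i h1 h2).2.2.1,
      fun i h1 h2 ↦ (hyz i h1 h2).2.2.2⟩
  · rintro ⟨n, x, y, z, hx0, hxn, -, hle, hends, hodd, heven⟩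
    refine ⟨n, x, hx0, hxn, fun i hi ↦ ⟨y (i + 1), z (i + 1), hle _ (by omega) (by omega), ?_,
      hodd _ (by omega) (by omega), heven _ (by omega) (by omega)⟩⟩
    simpa using hends (i + 1) (by omega) (by omega)

end

/-- Dilworth's description of principal congruences: the three conditions (i), (ii),
(iii) of Lemma 2.6 are equivalent. -/
theorem stmt6 {L : Type*} [Lattice L] (u₁ v₁ u₂ v₂ : L)
    (h₁ : u₁ ≤ v₁) (h₂ : u₂ ≤ v₂) :
    ((∀ x y : L, cg u₁ v₁ x y → cg u₂ v₂ x y) ↔ cg u₂ v₂ u₁ v₁) ∧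
    (cg u₂ v₂ u₁ v₁ ↔
      ∃ (n : ℕ) (x : ℕ → L) (y z : ℕ → ℕ → L),
        x 0 = u₁ ∧ x n = v₁ ∧ (∀ i < n, x i ≤ x (i + 1)) ∧
        (∀ i, 1 ≤ i → i ≤ n → ∀ j ≤ n, y i j ≤ z i j) ∧
        (∀ i, 1 ≤ i → i ≤ n →
          y i 0 = x (i - 1) ∧ z i 0 = x i ∧ y i n = u₂ ∧ z i n = v₂) ∧
        (∀ i, 1 ≤ i → i ≤ n → ∀ j, 1 ≤ j → j ≤ n → Odd j →
          y i (j - 1) = z i (j - 1) ⊓ y i j ∧ z i (j - 1) ≤ z i j) ∧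
        (∀ i, 1 ≤ i → i ≤ n → ∀ j, 1 ≤ j → j ≤ n → Even j →
          z i (j - 1) = y i (j - 1) ⊔ z i j ∧ y i j ≤ y i (j - 1))) := by
  refine ⟨⟨fun h ↦ h u₁ v₁ fun _ _ ↦ id, fun h _ _ hxy r hr huv ↦ hxy r hr (h r hr huv)⟩, ?_⟩
  rw [← exists_weakProjSteps_chain_iff_rows, ← reflTransGen_weakProj_iff_exists_chain h₂]
  exact ⟨reflTransGen_weakProj_of_cg h₁ h₂, cg_of_reflTransGen_weakProj⟩
end

section
/- Let L be a lattice and let (L_k)_{k ∈ I} be a family of sublattices of L that is directed under inclusion (for all k, m ∈ I there is n ∈ I with L_k ⊆ L_n and L_m ⊆ L_n) and whose union is L. Let i ∈ I and let u1 ≤ v1 and u2 ≤ v2 be elements of L_i. Then the pair (u1, v1) belongs to the principal congruence cg_L(u2, v2) computed in L if and only if there exists j ∈ I with L_i ⊆ L_j such that (u1, v1) belongs to the principal congruence cg_{L_j}(u2, v2) computed in the lattice L_j. -/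
lemma cg_refl {L : Type*} [Lattice L] (a b x : L) : cg a b x x :=
  fun _ hr _ => hr.1.1 x

lemma cg_symm {L : Type*} [Lattice L] {a b x y : L} (h : cg a b x y) : cg a b y x :=
  fun r hr hab => hr.1.symm (h r hr hab)

lemma cg_trans {L : Type*} [Lattice L] {a b x y z : L} (h : cg a b x y)
    (h' : cg a b y z) : cg a b x z :=
  fun r hr hab => hr.1.trans (h r hr hab) (h' r hr hab)

lemma cg_inf {L : Type*} [Lattice L] {a b x y z w : L} (h : cg a b x y)
    (h' : cg a b z w) : cg a b (x ⊓ z) (y ⊓ w) :=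
  fun r hr hab => hr.2.1 _ _ _ _ (h r hr hab) (h' r hr hab)

lemma cg_sup {L : Type*} [Lattice L] {a b x y z w : L} (h : cg a b x y)
    (h' : cg a b z w) : cg a b (x ⊔ z) (y ⊔ w) :=
  fun r hr hab => hr.2.2 _ _ _ _ (h r hr hab) (h' r hr hab)

lemma cg_self {L : Type*} [Lattice L] (a b : L) : cg a b a b :=
  fun _ _ hab => hab

/-- Principal congruences push forward along lattice homomorphisms. -/
lemma cg_map {A B : Type*} [Lattice A] [Lattice B] (f : A → B)
    (hinf : ∀ x y, f (x ⊓ y) = f x ⊓ f y) (hsup : ∀ x y, f (x ⊔ y) = f x ⊔ f y)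
    {a b x y : A} (h : cg a b x y) : cg (f a) (f b) (f x) (f y) := by
  intro r hr hab
  refine h (fun p q => r (f p) (f q)) ?_ hab
  refine ⟨⟨fun p => hr.1.1 _, fun h => hr.1.symm h, fun h h' => hr.1.trans h h'⟩,
    fun p q s t hp hq => ?_, fun p q s t hp hq => ?_⟩
  · show r (f (p ⊓ s)) (f (q ⊓ t))
    rw [hinf, hinf]; exact hr.2.1 _ _ _ _ hp hq
  · show r (f (p ⊔ s)) (f (q ⊔ t))
    rw [hsup, hsup]; exact hr.2.2 _ _ _ _ hp hq

/-- Push a principal congruence from a smaller sublattice to a larger one. -/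
lemma cg_incl {L : Type*} [Lattice L] {S T : Sublattice L}
    (h : ∀ x ∈ S, x ∈ T) {a b x y : L} {ha : a ∈ S} {hb : b ∈ S} {hx : x ∈ S} {hy : y ∈ S}
    (hc : cg (⟨a, ha⟩ : S) ⟨b, hb⟩ ⟨x, hx⟩ ⟨y, hy⟩) :
    cg (⟨a, h a ha⟩ : T) ⟨b, h b hb⟩ ⟨x, h x hx⟩ ⟨y, h y hy⟩ := by
  have := cg_map (A := S) (B := T) (fun z => ⟨z.1, h z.1 z.2⟩)
    (fun x y => rfl) (fun x y => rfl) hc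
  exact this

/-- For a directed family of sublattices covering `L`, membership in a principal
congruence of `L` is witnessed in some member of the family. -/
theorem stmt14 {L : Type*} [Lattice L] {I : Type*} (K : I → Sublattice L)
    (hdir : ∀ i j : I, ∃ k : I, (∀ x ∈ K i, x ∈ K k) ∧ (∀ x ∈ K j, x ∈ K k))
    (hcover : ∀ x : L, ∃ i : I, x ∈ K i)
    (i : I) (u₁ v₁ u₂ v₂ : L)
    (hu₁ : u₁ ∈ K i) (hv₁ : v₁ ∈ K i) (hu₂ : u₂ ∈ K i) (hv₂ : v₂ ∈ K i)
    (h₁ : u₁ ≤ v₁) (h₂ : u₂ ≤ v₂) :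
    cg u₂ v₂ u₁ v₁ ↔
      ∃ (j : I) (h : ∀ x ∈ K i, x ∈ K j),
        cg (⟨u₂, h u₂ hu₂⟩ : K j) ⟨v₂, h v₂ hv₂⟩ ⟨u₁, h u₁ hu₁⟩ ⟨v₁, h v₁ hv₁⟩ := by
  constructor
  · intro hc
    -- the "witnessed in some stage" relation
    set r : L → L → Prop := fun x y =>
      ∃ (j : I) (h : ∀ z ∈ K i, z ∈ K j) (hx : x ∈ K j) (hy : y ∈ K j),
        cg (⟨u₂, h u₂ hu₂⟩ : K j) ⟨v₂, h v₂ hv₂⟩ ⟨x, hx⟩ ⟨y, hy⟩ with hrdef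
    have hcomb : ∀ {x y z w : L}, r x y → r z w →
        ∃ (j : I) (h : ∀ t ∈ K i, t ∈ K j) (hx : x ∈ K j) (hy : y ∈ K j)
          (hz : z ∈ K j) (hw : w ∈ K j),
          cg (⟨u₂, h u₂ hu₂⟩ : K j) ⟨v₂, h v₂ hv₂⟩ ⟨x, hx⟩ ⟨y, hy⟩ ∧
          cg (⟨u₂, h u₂ hu₂⟩ : K j) ⟨v₂, h v₂ hv₂⟩ ⟨z, hz⟩ ⟨w, hw⟩ := by
      rintro x y z w ⟨j₁, h₁', hx, hy, hc₁⟩ ⟨j₂, h₂', hz, hw, hc₂⟩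
      obtain ⟨k, hk₁, hk₂⟩ := hdir j₁ j₂
      refine ⟨k, fun t ht => hk₁ t (h₁' t ht), hk₁ x hx, hk₁ y hy, hk₂ z hz, hk₂ w hw,
        cg_incl hk₁ hc₁, cg_incl hk₂ hc₂⟩
    have hrefl : ∀ x : L, r x x := by
      intro x
      obtain ⟨j₀, hj₀⟩ := hcover x
      obtain ⟨k, hk₁, hk₂⟩ := hdir i j₀
      exact ⟨k, hk₁, hk₂ x hj₀, hk₂ x hj₀, cg_refl _ _ _⟩
    have hrcon : IsLatCon r := by
      refine ⟨⟨hrefl, ?_, ?_⟩, ?_, ?_⟩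
      · rintro x y ⟨j, h, hx, hy, hc'⟩
        exact ⟨j, h, hy, hx, cg_symm hc'⟩
      · intro x y z hxy hyz
        obtain ⟨k, h, hx, hy, hy', hz, hc₁, hc₂⟩ := hcomb hxy hyz
        refine ⟨k, h, hx, hz, cg_trans hc₁ ?_⟩
        convert hc₂ using 2
      · intro a b c d hab hcd
        obtain ⟨k, h, ha, hb, hc', hd, hc₁, hc₂⟩ := hcomb hab hcd
        exact ⟨k, h, (K k).infClosed ha hc', (K k).infClosed hb hd, cg_inf hc₁ hc₂⟩
      · intro a b c d hab hcd
        obtain ⟨k, h, ha, hb, hc', hd, hc₁, hc₂⟩ := hcomb hab hcd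
        exact ⟨k, h, (K k).supClosed ha hc', (K k).supClosed hb hd, cg_sup hc₁ hc₂⟩
    have hr : r u₂ v₂ := ⟨i, fun _ ht => ht, hu₂, hv₂, cg_self _ _⟩
    obtain ⟨j, h, hx, hy, hc'⟩ := hc r hrcon hr
    exact ⟨j, h, hc'⟩
  · rintro ⟨j, h, hc⟩
    have := cg_map (A := K j) (B := L) (fun z => z.1) (fun _ _ => rfl) (fun _ _ => rfl) hc
    exact this
end

section
/- Let (L; γ, H, ν, δ, ε) be an auxiliary structure and let K be an arbitrary (possibly empty) set disjoint from H. Then there exists an auxiliary structure (L'; γ', H', ν', δ', ε') such that: (L; γ, H, ν, δ, ε) is a substructure of (L'; γ', H', ν', δ', ε'); H' is the disjoint union H ∪ K ∪ {1_{H'}} for a new element 1_{H'}; ν' is the smallest reflexive and transitive relation on H' containing ν ∪ ({0_H} × H') ∪ (H' × {1_{H'}}); if (L; γ, H, ν, δ, ε) is countable and K is countable then (L'; γ', H', ν', δ', ε') is countable; and moreover, for all p, q ∈ H' such that {p, q} is not contained in H and p ∥_{ν'} q, the quadruple (δ'(p), ε'(p), δ'(q), ε'(q)) is a strong N6-quadruple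 of L'. -/
/-- `(L; γ, H, ν)` is a quasi-colored lattice: `ν` is reflexive and transitive, `γ` is
surjective onto `H` via ordered pairs, and conditions (C1), (C2) hold for all ordered
pairs. (Here `γ` is given as a total map whose values only matter on ordered pairs.) -/
def IsQuasiColored {L H : Type*} [Lattice L] (γ : L → L → H) (ν : H → H → Prop) : Prop :=
  Reflexive ν ∧ Transitive ν ∧
  (∀ h : H, ∃ x y : L, x ≤ y ∧ γ x y = h) ∧
  (∀ u₁ v₁ u₂ v₂ : L, u₁ ≤ v₁ → u₂ ≤ v₂ → ν (γ u₁ v₁) (γ u₂ v₂) →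
    ∀ x y : L, cg u₁ v₁ x y → cg u₂ v₂ x y) ∧
  (∀ u₁ v₁ u₂ v₂ : L, u₁ ≤ v₁ → u₂ ≤ v₂ →
    (∀ x y : L, cg u₁ v₁ x y → cg u₂ v₂ x y) → ν (γ u₁ v₁) (γ u₂ v₂))

/-- The congruence generated by a set of pairs, as the least congruence containing it. -/
def cgSet {L : Type*} [Lattice L] (S : Set (L × L)) (x y : L) : Prop :=
  ∀ r : L → L → Prop, IsLatCon r → (∀ w ∈ S, r w.1 w.2) → r x y

/-- The least reflexive transitive relation (quasiorder) containing `R`. -/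
def quoClosure {H : Type*} (R : H → H → Prop) (x y : H) : Prop :=
  ∀ μ : H → H → Prop, Reflexive μ → Transitive μ → (∀ a b : H, R a b → μ a b) → μ x y

/-- `(a₁, b₁, a₂, b₂)` is an N₆-quadruple of `L`. -/
def IsN6 {L : Type*} [Lattice L] (a₁ b₁ a₂ b₂ : L) : Prop :=
  a₁ < b₁ ∧ a₂ < b₂ ∧ a₁ ⊓ a₂ = b₁ ⊓ b₂ ∧ a₁ ⊔ a₂ = b₁ ⊔ b₂ ∧
  ({a₁ ⊓ a₂, a₁, b₁, a₂, b₂, a₁ ⊔ a₂} : Set L).ncard = 6 ∧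
  SupClosed ({a₁ ⊓ a₂, a₁, b₁, a₂, b₂, a₁ ⊔ a₂} : Set L) ∧
  InfClosed ({a₁ ⊓ a₂, a₁, b₁, a₂, b₂, a₁ ⊔ a₂} : Set L)

/-- A spanning N₆-quadruple: an N₆-quadruple with `b₁ ⊓ b₂ = 0_L` and `a₁ ⊔ a₂ = 1_L`. -/
def IsSpanningN6 {L : Type*} [Lattice L] (a₁ b₁ a₂ b₂ : L) : Prop :=
  IsN6 a₁ b₁ a₂ b₂ ∧ IsBot (b₁ ⊓ b₂) ∧ IsTop (a₁ ⊔ a₂)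

/-- A strong N₆-quadruple: a spanning one satisfying the extra join/meet conditions. -/
def IsStrongN6 {L : Type*} [Lattice L] (a₁ b₁ a₂ b₂ : L) : Prop :=
  IsSpanningN6 a₁ b₁ a₂ b₂ ∧
  (∀ x : L, b₁ ⊓ b₂ < x → x ≤ b₁ → x ⊔ a₂ = a₁ ⊔ a₂) ∧
  (∀ x : L, b₁ ⊓ b₂ < x → x ≤ b₂ → x ⊔ a₁ = a₁ ⊔ a₂) ∧
  (∀ x : L, a₁ ≤ x → x < a₁ ⊔ a₂ → x ⊓ b₂ = b₁ ⊓ b₂) ∧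
  (∀ x : L, a₂ ≤ x → x < a₁ ⊔ a₂ → x ⊓ b₁ = b₁ ⊓ b₂)

/-- An auxiliary structure `(L; γ, H, ν, δ, ε)`, conditions (A1)–(A8). -/
structure AuxStr (L : Type*) (H : Type*) [Lattice L] where
  γ : L → L → H
  ν : H → H → Prop
  δ : H → L
  ε : H → L
  /-- `0_H`, the least element of `(H; ν)`. -/
  zero : H
  /-- (A1): `(L; γ, H, ν)` is a quasi-colored lattice. -/
  quasi : IsQuasiColored γ ν
  /-- (A2): `0_H` is a least element … -/
  zero_least : ∀ x : H, ν zero x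
  /-- (A2): … and it is the only least element … -/
  least_unique : ∀ z : H, (∀ x : H, ν z x) → z = zero
  /-- (A2): … and `(H; ν)` has at most one greatest element. -/
  greatest_unique : ∀ g₁ g₂ : H, (∀ x : H, ν x g₁) → (∀ x : H, ν x g₂) → g₁ = g₂
  /-- (A3): `δ 0_H = ε 0_H` … -/
  delta_zero : δ zero = ε zero
  /-- (A3): … and `δ x ≺ ε x` for `x ≠ 0_H`. -/
  delta_covby : ∀ x : H, x ≠ zero → δ x ⋖ ε x
  /-- (A4): `γ (δ p) (ε p) = p`. -/
  gamma_delta : ∀ p : H, γ (δ p) (ε p) = p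
  /-- (A5): distinct nonzero colors give N₆-quadruples. -/
  n6 : ∀ p q : H, p ≠ zero → q ≠ zero → p ≠ q → IsN6 (δ p) (ε p) (δ q) (ε q)
  /-- (A6): for `ν`-incomparable `p, q`, spanning N₆-quadruples are strong. -/
  strong : ∀ p q : H, ¬ ν p q → ¬ ν q p →
    IsSpanningN6 (δ p) (ε p) (δ q) (ε q) → IsStrongN6 (δ p) (ε p) (δ q) (ε q)
  /-- (A7): if `L` is bounded with `|L| > 1`, there are at least three doubly-covering
  complements of everything else. -/
  atoms3 : ∀ bot top : L, IsBot bot → IsTop top → bot ≠ top →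
    ∃ x₁ x₂ x₃ : L, x₁ ≠ x₂ ∧ x₁ ≠ x₃ ∧ x₂ ≠ x₃ ∧
      ∀ x ∈ ({x₁, x₂, x₃} : Set L), bot ⋖ x ∧ x ⋖ top ∧
        ∀ y : L, y ≠ bot → y ≠ top → y ≠ x → x ⊓ y = bot ∧ x ⊔ y = top
  /-- (A8): if `H` has a greatest element `1_H` and `|L| > 1`, the congruence generated
  by the pairs `(δ p, ε p)`, `p ≠ 1_H`, is not the full congruence. -/
  notfull : ∀ one : H, (∀ x : H, ν x one) → (∃ a b : L, a ≠ b) →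
    ∃ x y : L, ¬ cgSet {w : L × L | ∃ p : H, p ≠ one ∧ w = (δ p, ε p)} x y

/-- A substructure embedding of auxiliary structures: `f` embeds `L₁` as a sublattice
of `L₂`, `g` embeds `H₁` into `H₂` with `ν₁ ⊆ ν₂` and `0` preserved, and `γ`, `δ`, `ε`
of the small structure are the restrictions of those of the big one. -/
structure AuxSub {L₁ H₁ L₂ H₂ : Type*} [Lattice L₁] [Lattice L₂]
    (A : AuxStr L₁ H₁) (B : AuxStr L₂ H₂) where
  f : L₁ → L₂
  g : H₁ → H₂
  f_inj : Function.Injective f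
  g_inj : Function.Injective g
  f_inf : ∀ x y : L₁, f (x ⊓ y) = f x ⊓ f y
  f_sup : ∀ x y : L₁, f (x ⊔ y) = f x ⊔ f y
  g_zero : g A.zero = B.zero
  nu_mono : ∀ x y : H₁, A.ν x y → B.ν (g x) (g y)
  gamma_comm : ∀ x y : L₁, x ≤ y → B.γ (f x) (f y) = g (A.γ x y)
  delta_comm : ∀ p : H₁, f (A.δ p) = B.δ (g p)
  eps_comm : ∀ p : H₁, f (A.ε p) = B.ε (g p)
universe u v w


set_option maxHeartbeats 1000000

namespace Stmt15

inductive V (L : Type u) (K : Type w) : Type (max u w)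
  | bot | top | mid (i : Fin 3) | tc | td | te
  | lof (x : L) | ak (k : K) | bk (k : K)

namespace V

variable {L : Type u} {K : Type w} [Lattice L]

def le : V L K → V L K → Prop
  | .bot, _ => True
  | _, .top => True
  | .lof a, .lof b => a ≤ b
  | .mid i, .mid j => i = j
  | .ak j, .ak k => j = k
  | .ak j, .bk k => j = k
  | .bk j, .bk k => j = k
  | .tc, .tc => True
  | .tc, .te => True
  | .td, .td => True
  | .td, .te => True
  | .te, .te => True
  | _, _ => False

open scoped Classical in
noncomputable def sup : V L K → V L K → V L K
  | .bot, x => x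
  | x, .bot => x
  | .top, _ => .top
  | _, .top => .top
  | .lof a, .lof b => .lof (a ⊔ b)
  | .mid i, .mid j => if i = j then .mid i else .top
  | .ak j, .ak k => if j = k then .ak j else .top
  | .ak j, .bk k => if j = k then .bk k else .top
  | .bk j, .ak k => if j = k then .bk j else .top
  | .bk j, .bk k => if j = k then .bk j else .top
  | .tc, .tc => .tc
  | .tc, .td => .te
  | .td, .tc => .te
  | .tc, .te => .te
  | .te, .tc => .te
  | .td, .td => .td
  | .td, .te => .te
  | .te, .td => .te
  | .te, .te => .te
  | _, _ => .top

open scoped Classical in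
noncomputable def inf : V L K → V L K → V L K
  | .top, x => x
  | x, .top => x
  | .bot, _ => .bot
  | _, .bot => .bot
  | .lof a, .lof b => .lof (a ⊓ b)
  | .mid i, .mid j => if i = j then .mid i else .bot
  | .ak j, .ak k => if j = k then .ak j else .bot
  | .ak j, .bk k => if j = k then .ak j else .bot
  | .bk j, .ak k => if j = k then .ak k else .bot
  | .bk j, .bk k => if j = k then .bk j else .bot
  | .tc, .tc => .tc
  | .tc, .td => .bot
  | .td, .tc => .bot
  | .tc, .te => .tc
  | .te, .tc => .tc
  | .td, .td => .td
  | .td, .te => .td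
  | .te, .td => .td
  | .te, .te => .te
  | _, _ => .bot

section SimpLemmas
open scoped Classical
variable {L : Type u} {K : Type w} [Lattice L]
@[simp] lemma le_bot_bot : le (.bot : V L K) .bot = True := rfl
@[simp] lemma sup_bot_bot : sup (.bot : V L K) .bot = .bot := rfl
@[simp] lemma inf_bot_bot : inf (.bot : V L K) .bot = .bot := rfl
@[simp] lemma le_bot_top : le (.bot : V L K) .top = True := rfl
@[simp] lemma sup_bot_top : sup (.bot : V L K) .top = .top := rfl
@[simp] lemma inf_bot_top : inf (.bot : V L K) .top = .bot := rfl
@[simp] lemma le_bot_mid (i2 : Fin 3) : le (.bot : V L K) (.mid i2) = True := rfl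
@[simp] lemma sup_bot_mid (i2 : Fin 3) : sup (.bot : V L K) (.mid i2) = (.mid i2) := rfl
@[simp] lemma inf_bot_mid (i2 : Fin 3) : inf (.bot : V L K) (.mid i2) = .bot := rfl
@[simp] lemma le_bot_tc : le (.bot : V L K) .tc = True := rfl
@[simp] lemma sup_bot_tc : sup (.bot : V L K) .tc = .tc := rfl
@[simp] lemma inf_bot_tc : inf (.bot : V L K) .tc = .bot := rfl
@[simp] lemma le_bot_td : le (.bot : V L K) .td = True := rfl
@[simp] lemma sup_bot_td : sup (.bot : V L K) .td = .td := rfl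
@[simp] lemma inf_bot_td : inf (.bot : V L K) .td = .bot := rfl
@[simp] lemma le_bot_te : le (.bot : V L K) .te = True := rfl
@[simp] lemma sup_bot_te : sup (.bot : V L K) .te = .te := rfl
@[simp] lemma inf_bot_te : inf (.bot : V L K) .te = .bot := rfl
@[simp] lemma le_bot_lof (x2 : L) : le (.bot : V L K) (.lof x2) = True := rfl
@[simp] lemma sup_bot_lof (x2 : L) : sup (.bot : V L K) (.lof x2) = (.lof x2) := rfl
@[simp] lemma inf_bot_lof (x2 : L) : inf (.bot : V L K) (.lof x2) = .bot := rfl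
@[simp] lemma le_bot_ak (k2 : K) : le (.bot : V L K) (.ak k2) = True := rfl
@[simp] lemma sup_bot_ak (k2 : K) : sup (.bot : V L K) (.ak k2) = (.ak k2) := rfl
@[simp] lemma inf_bot_ak (k2 : K) : inf (.bot : V L K) (.ak k2) = .bot := rfl
@[simp] lemma le_bot_bk (k2 : K) : le (.bot : V L K) (.bk k2) = True := rfl
@[simp] lemma sup_bot_bk (k2 : K) : sup (.bot : V L K) (.bk k2) = (.bk k2) := rfl
@[simp] lemma inf_bot_bk (k2 : K) : inf (.bot : V L K) (.bk k2) = .bot := rfl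
@[simp] lemma le_top_bot : le (.top : V L K) .bot = False := rfl
@[simp] lemma sup_top_bot : sup (.top : V L K) .bot = .top := rfl
@[simp] lemma inf_top_bot : inf (.top : V L K) .bot = .bot := rfl
@[simp] lemma le_top_top : le (.top : V L K) .top = True := rfl
@[simp] lemma sup_top_top : sup (.top : V L K) .top = .top := rfl
@[simp] lemma inf_top_top : inf (.top : V L K) .top = .top := rfl
@[simp] lemma le_top_mid (i2 : Fin 3) : le (.top : V L K) (.mid i2) = False := rfl
@[simp] lemma sup_top_mid (i2 : Fin 3) : sup (.top : V L K) (.mid i2) = .top := rfl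
@[simp] lemma inf_top_mid (i2 : Fin 3) : inf (.top : V L K) (.mid i2) = (.mid i2) := rfl
@[simp] lemma le_top_tc : le (.top : V L K) .tc = False := rfl
@[simp] lemma sup_top_tc : sup (.top : V L K) .tc = .top := rfl
@[simp] lemma inf_top_tc : inf (.top : V L K) .tc = .tc := rfl
@[simp] lemma le_top_td : le (.top : V L K) .td = False := rfl
@[simp] lemma sup_top_td : sup (.top : V L K) .td = .top := rfl
@[simp] lemma inf_top_td : inf (.top : V L K) .td = .td := rfl
@[simp] lemma le_top_te : le (.top : V L K) .te = False := rfl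
@[simp] lemma sup_top_te : sup (.top : V L K) .te = .top := rfl
@[simp] lemma inf_top_te : inf (.top : V L K) .te = .te := rfl
@[simp] lemma le_top_lof (x2 : L) : le (.top : V L K) (.lof x2) = False := rfl
@[simp] lemma sup_top_lof (x2 : L) : sup (.top : V L K) (.lof x2) = .top := rfl
@[simp] lemma inf_top_lof (x2 : L) : inf (.top : V L K) (.lof x2) = (.lof x2) := rfl
@[simp] lemma le_top_ak (k2 : K) : le (.top : V L K) (.ak k2) = False := rfl
@[simp] lemma sup_top_ak (k2 : K) : sup (.top : V L K) (.ak k2) = .top := rfl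
@[simp] lemma inf_top_ak (k2 : K) : inf (.top : V L K) (.ak k2) = (.ak k2) := rfl
@[simp] lemma le_top_bk (k2 : K) : le (.top : V L K) (.bk k2) = False := rfl
@[simp] lemma sup_top_bk (k2 : K) : sup (.top : V L K) (.bk k2) = .top := rfl
@[simp] lemma inf_top_bk (k2 : K) : inf (.top : V L K) (.bk k2) = (.bk k2) := rfl
@[simp] lemma le_mid_bot (i1 : Fin 3) : le ((.mid i1) : V L K) .bot = False := rfl
@[simp] lemma sup_mid_bot (i1 : Fin 3) : sup ((.mid i1) : V L K) .bot = (.mid i1) := rfl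
@[simp] lemma inf_mid_bot (i1 : Fin 3) : inf ((.mid i1) : V L K) .bot = .bot := rfl
@[simp] lemma le_mid_top (i1 : Fin 3) : le ((.mid i1) : V L K) .top = True := rfl
@[simp] lemma sup_mid_top (i1 : Fin 3) : sup ((.mid i1) : V L K) .top = .top := rfl
@[simp] lemma inf_mid_top (i1 : Fin 3) : inf ((.mid i1) : V L K) .top = (.mid i1) := rfl
@[simp] lemma le_mid_mid (i1 : Fin 3) (i2 : Fin 3) : le ((.mid i1) : V L K) (.mid i2) = (i1 = i2) := rfl
@[simp] lemma sup_mid_mid (i1 : Fin 3) (i2 : Fin 3) : sup ((.mid i1) : V L K) (.mid i2) = (if i1 = i2 then V.mid i1 else .top) := rfl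
@[simp] lemma inf_mid_mid (i1 : Fin 3) (i2 : Fin 3) : inf ((.mid i1) : V L K) (.mid i2) = (if i1 = i2 then V.mid i1 else .bot) := rfl
@[simp] lemma le_mid_tc (i1 : Fin 3) : le ((.mid i1) : V L K) .tc = False := rfl
@[simp] lemma sup_mid_tc (i1 : Fin 3) : sup ((.mid i1) : V L K) .tc = .top := rfl
@[simp] lemma inf_mid_tc (i1 : Fin 3) : inf ((.mid i1) : V L K) .tc = .bot := rfl
@[simp] lemma le_mid_td (i1 : Fin 3) : le ((.mid i1) : V L K) .td = False := rfl
@[simp] lemma sup_mid_td (i1 : Fin 3) : sup ((.mid i1) : V L K) .td = .top := rfl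
@[simp] lemma inf_mid_td (i1 : Fin 3) : inf ((.mid i1) : V L K) .td = .bot := rfl
@[simp] lemma le_mid_te (i1 : Fin 3) : le ((.mid i1) : V L K) .te = False := rfl
@[simp] lemma sup_mid_te (i1 : Fin 3) : sup ((.mid i1) : V L K) .te = .top := rfl
@[simp] lemma inf_mid_te (i1 : Fin 3) : inf ((.mid i1) : V L K) .te = .bot := rfl
@[simp] lemma le_mid_lof (i1 : Fin 3) (x2 : L) : le ((.mid i1) : V L K) (.lof x2) = False := rfl
@[simp] lemma sup_mid_lof (i1 : Fin 3) (x2 : L) : sup ((.mid i1) : V L K) (.lof x2) = .top := rfl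
@[simp] lemma inf_mid_lof (i1 : Fin 3) (x2 : L) : inf ((.mid i1) : V L K) (.lof x2) = .bot := rfl
@[simp] lemma le_mid_ak (i1 : Fin 3) (k2 : K) : le ((.mid i1) : V L K) (.ak k2) = False := rfl
@[simp] lemma sup_mid_ak (i1 : Fin 3) (k2 : K) : sup ((.mid i1) : V L K) (.ak k2) = .top := rfl
@[simp] lemma inf_mid_ak (i1 : Fin 3) (k2 : K) : inf ((.mid i1) : V L K) (.ak k2) = .bot := rfl
@[simp] lemma le_mid_bk (i1 : Fin 3) (k2 : K) : le ((.mid i1) : V L K) (.bk k2) = False := rfl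
@[simp] lemma sup_mid_bk (i1 : Fin 3) (k2 : K) : sup ((.mid i1) : V L K) (.bk k2) = .top := rfl
@[simp] lemma inf_mid_bk (i1 : Fin 3) (k2 : K) : inf ((.mid i1) : V L K) (.bk k2) = .bot := rfl
@[simp] lemma le_tc_bot : le (.tc : V L K) .bot = False := rfl
@[simp] lemma sup_tc_bot : sup (.tc : V L K) .bot = .tc := rfl
@[simp] lemma inf_tc_bot : inf (.tc : V L K) .bot = .bot := rfl
@[simp] lemma le_tc_top : le (.tc : V L K) .top = True := rfl
@[simp] lemma sup_tc_top : sup (.tc : V L K) .top = .top := rfl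
@[simp] lemma inf_tc_top : inf (.tc : V L K) .top = .tc := rfl
@[simp] lemma le_tc_mid (i2 : Fin 3) : le (.tc : V L K) (.mid i2) = False := rfl
@[simp] lemma sup_tc_mid (i2 : Fin 3) : sup (.tc : V L K) (.mid i2) = .top := rfl
@[simp] lemma inf_tc_mid (i2 : Fin 3) : inf (.tc : V L K) (.mid i2) = .bot := rfl
@[simp] lemma le_tc_tc : le (.tc : V L K) .tc = True := rfl
@[simp] lemma sup_tc_tc : sup (.tc : V L K) .tc = .tc := rfl
@[simp] lemma inf_tc_tc : inf (.tc : V L K) .tc = .tc := rfl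
@[simp] lemma le_tc_td : le (.tc : V L K) .td = False := rfl
@[simp] lemma sup_tc_td : sup (.tc : V L K) .td = .te := rfl
@[simp] lemma inf_tc_td : inf (.tc : V L K) .td = .bot := rfl
@[simp] lemma le_tc_te : le (.tc : V L K) .te = True := rfl
@[simp] lemma sup_tc_te : sup (.tc : V L K) .te = .te := rfl
@[simp] lemma inf_tc_te : inf (.tc : V L K) .te = .tc := rfl
@[simp] lemma le_tc_lof (x2 : L) : le (.tc : V L K) (.lof x2) = False := rfl
@[simp] lemma sup_tc_lof (x2 : L) : sup (.tc : V L K) (.lof x2) = .top := rfl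
@[simp] lemma inf_tc_lof (x2 : L) : inf (.tc : V L K) (.lof x2) = .bot := rfl
@[simp] lemma le_tc_ak (k2 : K) : le (.tc : V L K) (.ak k2) = False := rfl
@[simp] lemma sup_tc_ak (k2 : K) : sup (.tc : V L K) (.ak k2) = .top := rfl
@[simp] lemma inf_tc_ak (k2 : K) : inf (.tc : V L K) (.ak k2) = .bot := rfl
@[simp] lemma le_tc_bk (k2 : K) : le (.tc : V L K) (.bk k2) = False := rfl
@[simp] lemma sup_tc_bk (k2 : K) : sup (.tc : V L K) (.bk k2) = .top := rfl
@[simp] lemma inf_tc_bk (k2 : K) : inf (.tc : V L K) (.bk k2) = .bot := rfl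
@[simp] lemma le_td_bot : le (.td : V L K) .bot = False := rfl
@[simp] lemma sup_td_bot : sup (.td : V L K) .bot = .td := rfl
@[simp] lemma inf_td_bot : inf (.td : V L K) .bot = .bot := rfl
@[simp] lemma le_td_top : le (.td : V L K) .top = True := rfl
@[simp] lemma sup_td_top : sup (.td : V L K) .top = .top := rfl
@[simp] lemma inf_td_top : inf (.td : V L K) .top = .td := rfl
@[simp] lemma le_td_mid (i2 : Fin 3) : le (.td : V L K) (.mid i2) = False := rfl
@[simp] lemma sup_td_mid (i2 : Fin 3) : sup (.td : V L K) (.mid i2) = .top := rfl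
@[simp] lemma inf_td_mid (i2 : Fin 3) : inf (.td : V L K) (.mid i2) = .bot := rfl
@[simp] lemma le_td_tc : le (.td : V L K) .tc = False := rfl
@[simp] lemma sup_td_tc : sup (.td : V L K) .tc = .te := rfl
@[simp] lemma inf_td_tc : inf (.td : V L K) .tc = .bot := rfl
@[simp] lemma le_td_td : le (.td : V L K) .td = True := rfl
@[simp] lemma sup_td_td : sup (.td : V L K) .td = .td := rfl
@[simp] lemma inf_td_td : inf (.td : V L K) .td = .td := rfl
@[simp] lemma le_td_te : le (.td : V L K) .te = True := rfl
@[simp] lemma sup_td_te : sup (.td : V L K) .te = .te := rfl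
@[simp] lemma inf_td_te : inf (.td : V L K) .te = .td := rfl
@[simp] lemma le_td_lof (x2 : L) : le (.td : V L K) (.lof x2) = False := rfl
@[simp] lemma sup_td_lof (x2 : L) : sup (.td : V L K) (.lof x2) = .top := rfl
@[simp] lemma inf_td_lof (x2 : L) : inf (.td : V L K) (.lof x2) = .bot := rfl
@[simp] lemma le_td_ak (k2 : K) : le (.td : V L K) (.ak k2) = False := rfl
@[simp] lemma sup_td_ak (k2 : K) : sup (.td : V L K) (.ak k2) = .top := rfl
@[simp] lemma inf_td_ak (k2 : K) : inf (.td : V L K) (.ak k2) = .bot := rfl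
@[simp] lemma le_td_bk (k2 : K) : le (.td : V L K) (.bk k2) = False := rfl
@[simp] lemma sup_td_bk (k2 : K) : sup (.td : V L K) (.bk k2) = .top := rfl
@[simp] lemma inf_td_bk (k2 : K) : inf (.td : V L K) (.bk k2) = .bot := rfl
@[simp] lemma le_te_bot : le (.te : V L K) .bot = False := rfl
@[simp] lemma sup_te_bot : sup (.te : V L K) .bot = .te := rfl
@[simp] lemma inf_te_bot : inf (.te : V L K) .bot = .bot := rfl
@[simp] lemma le_te_top : le (.te : V L K) .top = True := rfl
@[simp] lemma sup_te_top : sup (.te : V L K) .top = .top := rfl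
@[simp] lemma inf_te_top : inf (.te : V L K) .top = .te := rfl
@[simp] lemma le_te_mid (i2 : Fin 3) : le (.te : V L K) (.mid i2) = False := rfl
@[simp] lemma sup_te_mid (i2 : Fin 3) : sup (.te : V L K) (.mid i2) = .top := rfl
@[simp] lemma inf_te_mid (i2 : Fin 3) : inf (.te : V L K) (.mid i2) = .bot := rfl
@[simp] lemma le_te_tc : le (.te : V L K) .tc = False := rfl
@[simp] lemma sup_te_tc : sup (.te : V L K) .tc = .te := rfl
@[simp] lemma inf_te_tc : inf (.te : V L K) .tc = .tc := rfl
@[simp] lemma le_te_td : le (.te : V L K) .td = False := rfl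
@[simp] lemma sup_te_td : sup (.te : V L K) .td = .te := rfl
@[simp] lemma inf_te_td : inf (.te : V L K) .td = .td := rfl
@[simp] lemma le_te_te : le (.te : V L K) .te = True := rfl
@[simp] lemma sup_te_te : sup (.te : V L K) .te = .te := rfl
@[simp] lemma inf_te_te : inf (.te : V L K) .te = .te := rfl
@[simp] lemma le_te_lof (x2 : L) : le (.te : V L K) (.lof x2) = False := rfl
@[simp] lemma sup_te_lof (x2 : L) : sup (.te : V L K) (.lof x2) = .top := rfl
@[simp] lemma inf_te_lof (x2 : L) : inf (.te : V L K) (.lof x2) = .bot := rfl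
@[simp] lemma le_te_ak (k2 : K) : le (.te : V L K) (.ak k2) = False := rfl
@[simp] lemma sup_te_ak (k2 : K) : sup (.te : V L K) (.ak k2) = .top := rfl
@[simp] lemma inf_te_ak (k2 : K) : inf (.te : V L K) (.ak k2) = .bot := rfl
@[simp] lemma le_te_bk (k2 : K) : le (.te : V L K) (.bk k2) = False := rfl
@[simp] lemma sup_te_bk (k2 : K) : sup (.te : V L K) (.bk k2) = .top := rfl
@[simp] lemma inf_te_bk (k2 : K) : inf (.te : V L K) (.bk k2) = .bot := rfl
@[simp] lemma le_lof_bot (x1 : L) : le ((.lof x1) : V L K) .bot = False := rfl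
@[simp] lemma sup_lof_bot (x1 : L) : sup ((.lof x1) : V L K) .bot = (.lof x1) := rfl
@[simp] lemma inf_lof_bot (x1 : L) : inf ((.lof x1) : V L K) .bot = .bot := rfl
@[simp] lemma le_lof_top (x1 : L) : le ((.lof x1) : V L K) .top = True := rfl
@[simp] lemma sup_lof_top (x1 : L) : sup ((.lof x1) : V L K) .top = .top := rfl
@[simp] lemma inf_lof_top (x1 : L) : inf ((.lof x1) : V L K) .top = (.lof x1) := rfl
@[simp] lemma le_lof_mid (x1 : L) (i2 : Fin 3) : le ((.lof x1) : V L K) (.mid i2) = False := rfl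
@[simp] lemma sup_lof_mid (x1 : L) (i2 : Fin 3) : sup ((.lof x1) : V L K) (.mid i2) = .top := rfl
@[simp] lemma inf_lof_mid (x1 : L) (i2 : Fin 3) : inf ((.lof x1) : V L K) (.mid i2) = .bot := rfl
@[simp] lemma le_lof_tc (x1 : L) : le ((.lof x1) : V L K) .tc = False := rfl
@[simp] lemma sup_lof_tc (x1 : L) : sup ((.lof x1) : V L K) .tc = .top := rfl
@[simp] lemma inf_lof_tc (x1 : L) : inf ((.lof x1) : V L K) .tc = .bot := rfl
@[simp] lemma le_lof_td (x1 : L) : le ((.lof x1) : V L K) .td = False := rfl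
@[simp] lemma sup_lof_td (x1 : L) : sup ((.lof x1) : V L K) .td = .top := rfl
@[simp] lemma inf_lof_td (x1 : L) : inf ((.lof x1) : V L K) .td = .bot := rfl
@[simp] lemma le_lof_te (x1 : L) : le ((.lof x1) : V L K) .te = False := rfl
@[simp] lemma sup_lof_te (x1 : L) : sup ((.lof x1) : V L K) .te = .top := rfl
@[simp] lemma inf_lof_te (x1 : L) : inf ((.lof x1) : V L K) .te = .bot := rfl
@[simp] lemma le_lof_lof (x1 : L) (x2 : L) : le ((.lof x1) : V L K) (.lof x2) = (x1 ≤ x2) := rfl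
@[simp] lemma sup_lof_lof (x1 : L) (x2 : L) : sup ((.lof x1) : V L K) (.lof x2) = (.lof (x1 ⊔ x2)) := rfl
@[simp] lemma inf_lof_lof (x1 : L) (x2 : L) : inf ((.lof x1) : V L K) (.lof x2) = (.lof (x1 ⊓ x2)) := rfl
@[simp] lemma le_lof_ak (x1 : L) (k2 : K) : le ((.lof x1) : V L K) (.ak k2) = False := rfl
@[simp] lemma sup_lof_ak (x1 : L) (k2 : K) : sup ((.lof x1) : V L K) (.ak k2) = .top := rfl
@[simp] lemma inf_lof_ak (x1 : L) (k2 : K) : inf ((.lof x1) : V L K) (.ak k2) = .bot := rfl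
@[simp] lemma le_lof_bk (x1 : L) (k2 : K) : le ((.lof x1) : V L K) (.bk k2) = False := rfl
@[simp] lemma sup_lof_bk (x1 : L) (k2 : K) : sup ((.lof x1) : V L K) (.bk k2) = .top := rfl
@[simp] lemma inf_lof_bk (x1 : L) (k2 : K) : inf ((.lof x1) : V L K) (.bk k2) = .bot := rfl
@[simp] lemma le_ak_bot (k1 : K) : le ((.ak k1) : V L K) .bot = False := rfl
@[simp] lemma sup_ak_bot (k1 : K) : sup ((.ak k1) : V L K) .bot = (.ak k1) := rfl
@[simp] lemma inf_ak_bot (k1 : K) : inf ((.ak k1) : V L K) .bot = .bot := rfl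
@[simp] lemma le_ak_top (k1 : K) : le ((.ak k1) : V L K) .top = True := rfl
@[simp] lemma sup_ak_top (k1 : K) : sup ((.ak k1) : V L K) .top = .top := rfl
@[simp] lemma inf_ak_top (k1 : K) : inf ((.ak k1) : V L K) .top = (.ak k1) := rfl
@[simp] lemma le_ak_mid (k1 : K) (i2 : Fin 3) : le ((.ak k1) : V L K) (.mid i2) = False := rfl
@[simp] lemma sup_ak_mid (k1 : K) (i2 : Fin 3) : sup ((.ak k1) : V L K) (.mid i2) = .top := rfl
@[simp] lemma inf_ak_mid (k1 : K) (i2 : Fin 3) : inf ((.ak k1) : V L K) (.mid i2) = .bot := rfl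
@[simp] lemma le_ak_tc (k1 : K) : le ((.ak k1) : V L K) .tc = False := rfl
@[simp] lemma sup_ak_tc (k1 : K) : sup ((.ak k1) : V L K) .tc = .top := rfl
@[simp] lemma inf_ak_tc (k1 : K) : inf ((.ak k1) : V L K) .tc = .bot := rfl
@[simp] lemma le_ak_td (k1 : K) : le ((.ak k1) : V L K) .td = False := rfl
@[simp] lemma sup_ak_td (k1 : K) : sup ((.ak k1) : V L K) .td = .top := rfl
@[simp] lemma inf_ak_td (k1 : K) : inf ((.ak k1) : V L K) .td = .bot := rfl
@[simp] lemma le_ak_te (k1 : K) : le ((.ak k1) : V L K) .te = False := rfl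
@[simp] lemma sup_ak_te (k1 : K) : sup ((.ak k1) : V L K) .te = .top := rfl
@[simp] lemma inf_ak_te (k1 : K) : inf ((.ak k1) : V L K) .te = .bot := rfl
@[simp] lemma le_ak_lof (k1 : K) (x2 : L) : le ((.ak k1) : V L K) (.lof x2) = False := rfl
@[simp] lemma sup_ak_lof (k1 : K) (x2 : L) : sup ((.ak k1) : V L K) (.lof x2) = .top := rfl
@[simp] lemma inf_ak_lof (k1 : K) (x2 : L) : inf ((.ak k1) : V L K) (.lof x2) = .bot := rfl
@[simp] lemma le_ak_ak (k1 : K) (k2 : K) : le ((.ak k1) : V L K) (.ak k2) = (k1 = k2) := rfl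
@[simp] lemma sup_ak_ak (k1 : K) (k2 : K) : sup ((.ak k1) : V L K) (.ak k2) = (if k1 = k2 then V.ak k1 else .top) := rfl
@[simp] lemma inf_ak_ak (k1 : K) (k2 : K) : inf ((.ak k1) : V L K) (.ak k2) = (if k1 = k2 then V.ak k1 else .bot) := rfl
@[simp] lemma le_ak_bk (k1 : K) (k2 : K) : le ((.ak k1) : V L K) (.bk k2) = (k1 = k2) := rfl
@[simp] lemma sup_ak_bk (k1 : K) (k2 : K) : sup ((.ak k1) : V L K) (.bk k2) = (if k1 = k2 then V.bk k2 else .top) := rfl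
@[simp] lemma inf_ak_bk (k1 : K) (k2 : K) : inf ((.ak k1) : V L K) (.bk k2) = (if k1 = k2 then V.ak k1 else .bot) := rfl
@[simp] lemma le_bk_bot (k1 : K) : le ((.bk k1) : V L K) .bot = False := rfl
@[simp] lemma sup_bk_bot (k1 : K) : sup ((.bk k1) : V L K) .bot = (.bk k1) := rfl
@[simp] lemma inf_bk_bot (k1 : K) : inf ((.bk k1) : V L K) .bot = .bot := rfl
@[simp] lemma le_bk_top (k1 : K) : le ((.bk k1) : V L K) .top = True := rfl
@[simp] lemma sup_bk_top (k1 : K) : sup ((.bk k1) : V L K) .top = .top := rfl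
@[simp] lemma inf_bk_top (k1 : K) : inf ((.bk k1) : V L K) .top = (.bk k1) := rfl
@[simp] lemma le_bk_mid (k1 : K) (i2 : Fin 3) : le ((.bk k1) : V L K) (.mid i2) = False := rfl
@[simp] lemma sup_bk_mid (k1 : K) (i2 : Fin 3) : sup ((.bk k1) : V L K) (.mid i2) = .top := rfl
@[simp] lemma inf_bk_mid (k1 : K) (i2 : Fin 3) : inf ((.bk k1) : V L K) (.mid i2) = .bot := rfl
@[simp] lemma le_bk_tc (k1 : K) : le ((.bk k1) : V L K) .tc = False := rfl
@[simp] lemma sup_bk_tc (k1 : K) : sup ((.bk k1) : V L K) .tc = .top := rfl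
@[simp] lemma inf_bk_tc (k1 : K) : inf ((.bk k1) : V L K) .tc = .bot := rfl
@[simp] lemma le_bk_td (k1 : K) : le ((.bk k1) : V L K) .td = False := rfl
@[simp] lemma sup_bk_td (k1 : K) : sup ((.bk k1) : V L K) .td = .top := rfl
@[simp] lemma inf_bk_td (k1 : K) : inf ((.bk k1) : V L K) .td = .bot := rfl
@[simp] lemma le_bk_te (k1 : K) : le ((.bk k1) : V L K) .te = False := rfl
@[simp] lemma sup_bk_te (k1 : K) : sup ((.bk k1) : V L K) .te = .top := rfl
@[simp] lemma inf_bk_te (k1 : K) : inf ((.bk k1) : V L K) .te = .bot := rfl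
@[simp] lemma le_bk_lof (k1 : K) (x2 : L) : le ((.bk k1) : V L K) (.lof x2) = False := rfl
@[simp] lemma sup_bk_lof (k1 : K) (x2 : L) : sup ((.bk k1) : V L K) (.lof x2) = .top := rfl
@[simp] lemma inf_bk_lof (k1 : K) (x2 : L) : inf ((.bk k1) : V L K) (.lof x2) = .bot := rfl
@[simp] lemma le_bk_ak (k1 : K) (k2 : K) : le ((.bk k1) : V L K) (.ak k2) = False := rfl
@[simp] lemma sup_bk_ak (k1 : K) (k2 : K) : sup ((.bk k1) : V L K) (.ak k2) = (if k1 = k2 then V.bk k1 else .top) := rfl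
@[simp] lemma inf_bk_ak (k1 : K) (k2 : K) : inf ((.bk k1) : V L K) (.ak k2) = (if k1 = k2 then V.ak k2 else .bot) := rfl
@[simp] lemma le_bk_bk (k1 : K) (k2 : K) : le ((.bk k1) : V L K) (.bk k2) = (k1 = k2) := rfl
@[simp] lemma sup_bk_bk (k1 : K) (k2 : K) : sup ((.bk k1) : V L K) (.bk k2) = (if k1 = k2 then V.bk k1 else .top) := rfl
@[simp] lemma inf_bk_bk (k1 : K) (k2 : K) : inf ((.bk k1) : V L K) (.bk k2) = (if k1 = k2 then V.bk k1 else .bot) := rfl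
end SimpLemmas

@[simp] lemma le_top' : ∀ x : V L K, le x .top := by intro x; cases x <;> simp
@[simp] lemma bot_le' : ∀ x : V L K, le .bot x := by intro x; cases x <;> simp

noncomputable instance : PartialOrder (V L K) where
  le := le
  le_refl := by intro a; cases a <;> simp
  le_trans := by
    intro a b c hab hbc
    cases a <;> cases b <;> cases c <;> simp_all <;>
      try exact le_trans hab hbc
  le_antisymm := by
    intro a b hab hba
    cases a <;> cases b <;> simp_all <;> exact le_antisymm hab hba

noncomputable instance : Lattice (V L K) where
  sup := sup
  le_sup_left := by
    intro a b
    show le a (sup a b)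
    cases a <;> cases b <;> simp <;> (try split_ifs) <;> simp_all
  le_sup_right := by
    intro a b
    show le b (sup a b)
    cases a <;> cases b <;> simp <;> (try split_ifs) <;> simp_all
  sup_le := by
    intro a b c hac hbc
    show le (sup a b) c
    rw [show (a ≤ c) = le a c from rfl] at hac
    rw [show (b ≤ c) = le b c from rfl] at hbc
    cases a <;> cases b <;> cases c <;> simp_all <;>
      (try split_ifs) <;> simp_all <;> try exact sup_le hac hbc
  inf := inf
  inf_le_left := by
    intro a b
    show le (inf a b) a
    cases a <;> cases b <;> simp <;> (try split_ifs) <;> simp_all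
  inf_le_right := by
    intro a b
    show le (inf a b) b
    cases a <;> cases b <;> simp <;> (try split_ifs) <;> simp_all
  le_inf := by
    intro a b c hab hac
    show le a (inf b c)
    rw [show (a ≤ b) = le a b from rfl] at hab
    rw [show (a ≤ c) = le a c from rfl] at hac
    cases b <;> cases c <;> cases a <;> simp_all <;>
      (try split_ifs) <;> simp_all <;> try exact le_inf hab hac



section SimpLemmas2
open scoped Classical
variable {L : Type u} {K : Type w} [Lattice L]
@[simp] lemma ile_bot_bot : ((.bot : V L K) ≤ .bot) = True := rfl
@[simp] lemma isup_bot_bot : ((.bot : V L K) ⊔ .bot) = .bot := rfl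
@[simp] lemma iinf_bot_bot : ((.bot : V L K) ⊓ .bot) = .bot := rfl
@[simp] lemma ile_bot_top : ((.bot : V L K) ≤ .top) = True := rfl
@[simp] lemma isup_bot_top : ((.bot : V L K) ⊔ .top) = .top := rfl
@[simp] lemma iinf_bot_top : ((.bot : V L K) ⊓ .top) = .bot := rfl
@[simp] lemma ile_bot_mid (i2 : Fin 3) : ((.bot : V L K) ≤ (.mid i2)) = True := rfl
@[simp] lemma isup_bot_mid (i2 : Fin 3) : ((.bot : V L K) ⊔ (.mid i2)) = (.mid i2) := rfl
@[simp] lemma iinf_bot_mid (i2 : Fin 3) : ((.bot : V L K) ⊓ (.mid i2)) = .bot := rfl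
@[simp] lemma ile_bot_tc : ((.bot : V L K) ≤ .tc) = True := rfl
@[simp] lemma isup_bot_tc : ((.bot : V L K) ⊔ .tc) = .tc := rfl
@[simp] lemma iinf_bot_tc : ((.bot : V L K) ⊓ .tc) = .bot := rfl
@[simp] lemma ile_bot_td : ((.bot : V L K) ≤ .td) = True := rfl
@[simp] lemma isup_bot_td : ((.bot : V L K) ⊔ .td) = .td := rfl
@[simp] lemma iinf_bot_td : ((.bot : V L K) ⊓ .td) = .bot := rfl
@[simp] lemma ile_bot_te : ((.bot : V L K) ≤ .te) = True := rfl
@[simp] lemma isup_bot_te : ((.bot : V L K) ⊔ .te) = .te := rfl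
@[simp] lemma iinf_bot_te : ((.bot : V L K) ⊓ .te) = .bot := rfl
@[simp] lemma ile_bot_lof (x2 : L) : ((.bot : V L K) ≤ (.lof x2)) = True := rfl
@[simp] lemma isup_bot_lof (x2 : L) : ((.bot : V L K) ⊔ (.lof x2)) = (.lof x2) := rfl
@[simp] lemma iinf_bot_lof (x2 : L) : ((.bot : V L K) ⊓ (.lof x2)) = .bot := rfl
@[simp] lemma ile_bot_ak (k2 : K) : ((.bot : V L K) ≤ (.ak k2)) = True := rfl
@[simp] lemma isup_bot_ak (k2 : K) : ((.bot : V L K) ⊔ (.ak k2)) = (.ak k2) := rfl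
@[simp] lemma iinf_bot_ak (k2 : K) : ((.bot : V L K) ⊓ (.ak k2)) = .bot := rfl
@[simp] lemma ile_bot_bk (k2 : K) : ((.bot : V L K) ≤ (.bk k2)) = True := rfl
@[simp] lemma isup_bot_bk (k2 : K) : ((.bot : V L K) ⊔ (.bk k2)) = (.bk k2) := rfl
@[simp] lemma iinf_bot_bk (k2 : K) : ((.bot : V L K) ⊓ (.bk k2)) = .bot := rfl
@[simp] lemma ile_top_bot : ((.top : V L K) ≤ .bot) = False := rfl
@[simp] lemma isup_top_bot : ((.top : V L K) ⊔ .bot) = .top := rfl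
@[simp] lemma iinf_top_bot : ((.top : V L K) ⊓ .bot) = .bot := rfl
@[simp] lemma ile_top_top : ((.top : V L K) ≤ .top) = True := rfl
@[simp] lemma isup_top_top : ((.top : V L K) ⊔ .top) = .top := rfl
@[simp] lemma iinf_top_top : ((.top : V L K) ⊓ .top) = .top := rfl
@[simp] lemma ile_top_mid (i2 : Fin 3) : ((.top : V L K) ≤ (.mid i2)) = False := rfl
@[simp] lemma isup_top_mid (i2 : Fin 3) : ((.top : V L K) ⊔ (.mid i2)) = .top := rfl
@[simp] lemma iinf_top_mid (i2 : Fin 3) : ((.top : V L K) ⊓ (.mid i2)) = (.mid i2) := rfl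
@[simp] lemma ile_top_tc : ((.top : V L K) ≤ .tc) = False := rfl
@[simp] lemma isup_top_tc : ((.top : V L K) ⊔ .tc) = .top := rfl
@[simp] lemma iinf_top_tc : ((.top : V L K) ⊓ .tc) = .tc := rfl
@[simp] lemma ile_top_td : ((.top : V L K) ≤ .td) = False := rfl
@[simp] lemma isup_top_td : ((.top : V L K) ⊔ .td) = .top := rfl
@[simp] lemma iinf_top_td : ((.top : V L K) ⊓ .td) = .td := rfl
@[simp] lemma ile_top_te : ((.top : V L K) ≤ .te) = False := rfl
@[simp] lemma isup_top_te : ((.top : V L K) ⊔ .te) = .top := rfl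
@[simp] lemma iinf_top_te : ((.top : V L K) ⊓ .te) = .te := rfl
@[simp] lemma ile_top_lof (x2 : L) : ((.top : V L K) ≤ (.lof x2)) = False := rfl
@[simp] lemma isup_top_lof (x2 : L) : ((.top : V L K) ⊔ (.lof x2)) = .top := rfl
@[simp] lemma iinf_top_lof (x2 : L) : ((.top : V L K) ⊓ (.lof x2)) = (.lof x2) := rfl
@[simp] lemma ile_top_ak (k2 : K) : ((.top : V L K) ≤ (.ak k2)) = False := rfl
@[simp] lemma isup_top_ak (k2 : K) : ((.top : V L K) ⊔ (.ak k2)) = .top := rfl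
@[simp] lemma iinf_top_ak (k2 : K) : ((.top : V L K) ⊓ (.ak k2)) = (.ak k2) := rfl
@[simp] lemma ile_top_bk (k2 : K) : ((.top : V L K) ≤ (.bk k2)) = False := rfl
@[simp] lemma isup_top_bk (k2 : K) : ((.top : V L K) ⊔ (.bk k2)) = .top := rfl
@[simp] lemma iinf_top_bk (k2 : K) : ((.top : V L K) ⊓ (.bk k2)) = (.bk k2) := rfl
@[simp] lemma ile_mid_bot (i1 : Fin 3) : (((.mid i1) : V L K) ≤ .bot) = False := rfl
@[simp] lemma isup_mid_bot (i1 : Fin 3) : (((.mid i1) : V L K) ⊔ .bot) = (.mid i1) := rfl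
@[simp] lemma iinf_mid_bot (i1 : Fin 3) : (((.mid i1) : V L K) ⊓ .bot) = .bot := rfl
@[simp] lemma ile_mid_top (i1 : Fin 3) : (((.mid i1) : V L K) ≤ .top) = True := rfl
@[simp] lemma isup_mid_top (i1 : Fin 3) : (((.mid i1) : V L K) ⊔ .top) = .top := rfl
@[simp] lemma iinf_mid_top (i1 : Fin 3) : (((.mid i1) : V L K) ⊓ .top) = (.mid i1) := rfl
@[simp] lemma ile_mid_mid (i1 : Fin 3) (i2 : Fin 3) : (((.mid i1) : V L K) ≤ (.mid i2)) = (i1 = i2) := rfl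
@[simp] lemma isup_mid_mid (i1 : Fin 3) (i2 : Fin 3) : (((.mid i1) : V L K) ⊔ (.mid i2)) = (if i1 = i2 then V.mid i1 else .top) := rfl
@[simp] lemma iinf_mid_mid (i1 : Fin 3) (i2 : Fin 3) : (((.mid i1) : V L K) ⊓ (.mid i2)) = (if i1 = i2 then V.mid i1 else .bot) := rfl
@[simp] lemma ile_mid_tc (i1 : Fin 3) : (((.mid i1) : V L K) ≤ .tc) = False := rfl
@[simp] lemma isup_mid_tc (i1 : Fin 3) : (((.mid i1) : V L K) ⊔ .tc) = .top := rfl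
@[simp] lemma iinf_mid_tc (i1 : Fin 3) : (((.mid i1) : V L K) ⊓ .tc) = .bot := rfl
@[simp] lemma ile_mid_td (i1 : Fin 3) : (((.mid i1) : V L K) ≤ .td) = False := rfl
@[simp] lemma isup_mid_td (i1 : Fin 3) : (((.mid i1) : V L K) ⊔ .td) = .top := rfl
@[simp] lemma iinf_mid_td (i1 : Fin 3) : (((.mid i1) : V L K) ⊓ .td) = .bot := rfl
@[simp] lemma ile_mid_te (i1 : Fin 3) : (((.mid i1) : V L K) ≤ .te) = False := rfl
@[simp] lemma isup_mid_te (i1 : Fin 3) : (((.mid i1) : V L K) ⊔ .te) = .top := rfl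
@[simp] lemma iinf_mid_te (i1 : Fin 3) : (((.mid i1) : V L K) ⊓ .te) = .bot := rfl
@[simp] lemma ile_mid_lof (i1 : Fin 3) (x2 : L) : (((.mid i1) : V L K) ≤ (.lof x2)) = False := rfl
@[simp] lemma isup_mid_lof (i1 : Fin 3) (x2 : L) : (((.mid i1) : V L K) ⊔ (.lof x2)) = .top := rfl
@[simp] lemma iinf_mid_lof (i1 : Fin 3) (x2 : L) : (((.mid i1) : V L K) ⊓ (.lof x2)) = .bot := rfl
@[simp] lemma ile_mid_ak (i1 : Fin 3) (k2 : K) : (((.mid i1) : V L K) ≤ (.ak k2)) = False := rfl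
@[simp] lemma isup_mid_ak (i1 : Fin 3) (k2 : K) : (((.mid i1) : V L K) ⊔ (.ak k2)) = .top := rfl
@[simp] lemma iinf_mid_ak (i1 : Fin 3) (k2 : K) : (((.mid i1) : V L K) ⊓ (.ak k2)) = .bot := rfl
@[simp] lemma ile_mid_bk (i1 : Fin 3) (k2 : K) : (((.mid i1) : V L K) ≤ (.bk k2)) = False := rfl
@[simp] lemma isup_mid_bk (i1 : Fin 3) (k2 : K) : (((.mid i1) : V L K) ⊔ (.bk k2)) = .top := rfl
@[simp] lemma iinf_mid_bk (i1 : Fin 3) (k2 : K) : (((.mid i1) : V L K) ⊓ (.bk k2)) = .bot := rfl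
@[simp] lemma ile_tc_bot : ((.tc : V L K) ≤ .bot) = False := rfl
@[simp] lemma isup_tc_bot : ((.tc : V L K) ⊔ .bot) = .tc := rfl
@[simp] lemma iinf_tc_bot : ((.tc : V L K) ⊓ .bot) = .bot := rfl
@[simp] lemma ile_tc_top : ((.tc : V L K) ≤ .top) = True := rfl
@[simp] lemma isup_tc_top : ((.tc : V L K) ⊔ .top) = .top := rfl
@[simp] lemma iinf_tc_top : ((.tc : V L K) ⊓ .top) = .tc := rfl
@[simp] lemma ile_tc_mid (i2 : Fin 3) : ((.tc : V L K) ≤ (.mid i2)) = False := rfl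
@[simp] lemma isup_tc_mid (i2 : Fin 3) : ((.tc : V L K) ⊔ (.mid i2)) = .top := rfl
@[simp] lemma iinf_tc_mid (i2 : Fin 3) : ((.tc : V L K) ⊓ (.mid i2)) = .bot := rfl
@[simp] lemma ile_tc_tc : ((.tc : V L K) ≤ .tc) = True := rfl
@[simp] lemma isup_tc_tc : ((.tc : V L K) ⊔ .tc) = .tc := rfl
@[simp] lemma iinf_tc_tc : ((.tc : V L K) ⊓ .tc) = .tc := rfl
@[simp] lemma ile_tc_td : ((.tc : V L K) ≤ .td) = False := rfl
@[simp] lemma isup_tc_td : ((.tc : V L K) ⊔ .td) = .te := rfl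
@[simp] lemma iinf_tc_td : ((.tc : V L K) ⊓ .td) = .bot := rfl
@[simp] lemma ile_tc_te : ((.tc : V L K) ≤ .te) = True := rfl
@[simp] lemma isup_tc_te : ((.tc : V L K) ⊔ .te) = .te := rfl
@[simp] lemma iinf_tc_te : ((.tc : V L K) ⊓ .te) = .tc := rfl
@[simp] lemma ile_tc_lof (x2 : L) : ((.tc : V L K) ≤ (.lof x2)) = False := rfl
@[simp] lemma isup_tc_lof (x2 : L) : ((.tc : V L K) ⊔ (.lof x2)) = .top := rfl
@[simp] lemma iinf_tc_lof (x2 : L) : ((.tc : V L K) ⊓ (.lof x2)) = .bot := rfl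
@[simp] lemma ile_tc_ak (k2 : K) : ((.tc : V L K) ≤ (.ak k2)) = False := rfl
@[simp] lemma isup_tc_ak (k2 : K) : ((.tc : V L K) ⊔ (.ak k2)) = .top := rfl
@[simp] lemma iinf_tc_ak (k2 : K) : ((.tc : V L K) ⊓ (.ak k2)) = .bot := rfl
@[simp] lemma ile_tc_bk (k2 : K) : ((.tc : V L K) ≤ (.bk k2)) = False := rfl
@[simp] lemma isup_tc_bk (k2 : K) : ((.tc : V L K) ⊔ (.bk k2)) = .top := rfl
@[simp] lemma iinf_tc_bk (k2 : K) : ((.tc : V L K) ⊓ (.bk k2)) = .bot := rfl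
@[simp] lemma ile_td_bot : ((.td : V L K) ≤ .bot) = False := rfl
@[simp] lemma isup_td_bot : ((.td : V L K) ⊔ .bot) = .td := rfl
@[simp] lemma iinf_td_bot : ((.td : V L K) ⊓ .bot) = .bot := rfl
@[simp] lemma ile_td_top : ((.td : V L K) ≤ .top) = True := rfl
@[simp] lemma isup_td_top : ((.td : V L K) ⊔ .top) = .top := rfl
@[simp] lemma iinf_td_top : ((.td : V L K) ⊓ .top) = .td := rfl
@[simp] lemma ile_td_mid (i2 : Fin 3) : ((.td : V L K) ≤ (.mid i2)) = False := rfl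
@[simp] lemma isup_td_mid (i2 : Fin 3) : ((.td : V L K) ⊔ (.mid i2)) = .top := rfl
@[simp] lemma iinf_td_mid (i2 : Fin 3) : ((.td : V L K) ⊓ (.mid i2)) = .bot := rfl
@[simp] lemma ile_td_tc : ((.td : V L K) ≤ .tc) = False := rfl
@[simp] lemma isup_td_tc : ((.td : V L K) ⊔ .tc) = .te := rfl
@[simp] lemma iinf_td_tc : ((.td : V L K) ⊓ .tc) = .bot := rfl
@[simp] lemma ile_td_td : ((.td : V L K) ≤ .td) = True := rfl
@[simp] lemma isup_td_td : ((.td : V L K) ⊔ .td) = .td := rfl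
@[simp] lemma iinf_td_td : ((.td : V L K) ⊓ .td) = .td := rfl
@[simp] lemma ile_td_te : ((.td : V L K) ≤ .te) = True := rfl
@[simp] lemma isup_td_te : ((.td : V L K) ⊔ .te) = .te := rfl
@[simp] lemma iinf_td_te : ((.td : V L K) ⊓ .te) = .td := rfl
@[simp] lemma ile_td_lof (x2 : L) : ((.td : V L K) ≤ (.lof x2)) = False := rfl
@[simp] lemma isup_td_lof (x2 : L) : ((.td : V L K) ⊔ (.lof x2)) = .top := rfl
@[simp] lemma iinf_td_lof (x2 : L) : ((.td : V L K) ⊓ (.lof x2)) = .bot := rfl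
@[simp] lemma ile_td_ak (k2 : K) : ((.td : V L K) ≤ (.ak k2)) = False := rfl
@[simp] lemma isup_td_ak (k2 : K) : ((.td : V L K) ⊔ (.ak k2)) = .top := rfl
@[simp] lemma iinf_td_ak (k2 : K) : ((.td : V L K) ⊓ (.ak k2)) = .bot := rfl
@[simp] lemma ile_td_bk (k2 : K) : ((.td : V L K) ≤ (.bk k2)) = False := rfl
@[simp] lemma isup_td_bk (k2 : K) : ((.td : V L K) ⊔ (.bk k2)) = .top := rfl
@[simp] lemma iinf_td_bk (k2 : K) : ((.td : V L K) ⊓ (.bk k2)) = .bot := rfl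
@[simp] lemma ile_te_bot : ((.te : V L K) ≤ .bot) = False := rfl
@[simp] lemma isup_te_bot : ((.te : V L K) ⊔ .bot) = .te := rfl
@[simp] lemma iinf_te_bot : ((.te : V L K) ⊓ .bot) = .bot := rfl
@[simp] lemma ile_te_top : ((.te : V L K) ≤ .top) = True := rfl
@[simp] lemma isup_te_top : ((.te : V L K) ⊔ .top) = .top := rfl
@[simp] lemma iinf_te_top : ((.te : V L K) ⊓ .top) = .te := rfl
@[simp] lemma ile_te_mid (i2 : Fin 3) : ((.te : V L K) ≤ (.mid i2)) = False := rfl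
@[simp] lemma isup_te_mid (i2 : Fin 3) : ((.te : V L K) ⊔ (.mid i2)) = .top := rfl
@[simp] lemma iinf_te_mid (i2 : Fin 3) : ((.te : V L K) ⊓ (.mid i2)) = .bot := rfl
@[simp] lemma ile_te_tc : ((.te : V L K) ≤ .tc) = False := rfl
@[simp] lemma isup_te_tc : ((.te : V L K) ⊔ .tc) = .te := rfl
@[simp] lemma iinf_te_tc : ((.te : V L K) ⊓ .tc) = .tc := rfl
@[simp] lemma ile_te_td : ((.te : V L K) ≤ .td) = False := rfl
@[simp] lemma isup_te_td : ((.te : V L K) ⊔ .td) = .te := rfl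
@[simp] lemma iinf_te_td : ((.te : V L K) ⊓ .td) = .td := rfl
@[simp] lemma ile_te_te : ((.te : V L K) ≤ .te) = True := rfl
@[simp] lemma isup_te_te : ((.te : V L K) ⊔ .te) = .te := rfl
@[simp] lemma iinf_te_te : ((.te : V L K) ⊓ .te) = .te := rfl
@[simp] lemma ile_te_lof (x2 : L) : ((.te : V L K) ≤ (.lof x2)) = False := rfl
@[simp] lemma isup_te_lof (x2 : L) : ((.te : V L K) ⊔ (.lof x2)) = .top := rfl
@[simp] lemma iinf_te_lof (x2 : L) : ((.te : V L K) ⊓ (.lof x2)) = .bot := rfl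
@[simp] lemma ile_te_ak (k2 : K) : ((.te : V L K) ≤ (.ak k2)) = False := rfl
@[simp] lemma isup_te_ak (k2 : K) : ((.te : V L K) ⊔ (.ak k2)) = .top := rfl
@[simp] lemma iinf_te_ak (k2 : K) : ((.te : V L K) ⊓ (.ak k2)) = .bot := rfl
@[simp] lemma ile_te_bk (k2 : K) : ((.te : V L K) ≤ (.bk k2)) = False := rfl
@[simp] lemma isup_te_bk (k2 : K) : ((.te : V L K) ⊔ (.bk k2)) = .top := rfl
@[simp] lemma iinf_te_bk (k2 : K) : ((.te : V L K) ⊓ (.bk k2)) = .bot := rfl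
@[simp] lemma ile_lof_bot (x1 : L) : (((.lof x1) : V L K) ≤ .bot) = False := rfl
@[simp] lemma isup_lof_bot (x1 : L) : (((.lof x1) : V L K) ⊔ .bot) = (.lof x1) := rfl
@[simp] lemma iinf_lof_bot (x1 : L) : (((.lof x1) : V L K) ⊓ .bot) = .bot := rfl
@[simp] lemma ile_lof_top (x1 : L) : (((.lof x1) : V L K) ≤ .top) = True := rfl
@[simp] lemma isup_lof_top (x1 : L) : (((.lof x1) : V L K) ⊔ .top) = .top := rfl
@[simp] lemma iinf_lof_top (x1 : L) : (((.lof x1) : V L K) ⊓ .top) = (.lof x1) := rfl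
@[simp] lemma ile_lof_mid (x1 : L) (i2 : Fin 3) : (((.lof x1) : V L K) ≤ (.mid i2)) = False := rfl
@[simp] lemma isup_lof_mid (x1 : L) (i2 : Fin 3) : (((.lof x1) : V L K) ⊔ (.mid i2)) = .top := rfl
@[simp] lemma iinf_lof_mid (x1 : L) (i2 : Fin 3) : (((.lof x1) : V L K) ⊓ (.mid i2)) = .bot := rfl
@[simp] lemma ile_lof_tc (x1 : L) : (((.lof x1) : V L K) ≤ .tc) = False := rfl
@[simp] lemma isup_lof_tc (x1 : L) : (((.lof x1) : V L K) ⊔ .tc) = .top := rfl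
@[simp] lemma iinf_lof_tc (x1 : L) : (((.lof x1) : V L K) ⊓ .tc) = .bot := rfl
@[simp] lemma ile_lof_td (x1 : L) : (((.lof x1) : V L K) ≤ .td) = False := rfl
@[simp] lemma isup_lof_td (x1 : L) : (((.lof x1) : V L K) ⊔ .td) = .top := rfl
@[simp] lemma iinf_lof_td (x1 : L) : (((.lof x1) : V L K) ⊓ .td) = .bot := rfl
@[simp] lemma ile_lof_te (x1 : L) : (((.lof x1) : V L K) ≤ .te) = False := rfl
@[simp] lemma isup_lof_te (x1 : L) : (((.lof x1) : V L K) ⊔ .te) = .top := rfl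
@[simp] lemma iinf_lof_te (x1 : L) : (((.lof x1) : V L K) ⊓ .te) = .bot := rfl
@[simp] lemma ile_lof_lof (x1 : L) (x2 : L) : (((.lof x1) : V L K) ≤ (.lof x2)) = (x1 ≤ x2) := rfl
@[simp] lemma isup_lof_lof (x1 : L) (x2 : L) : (((.lof x1) : V L K) ⊔ (.lof x2)) = (.lof (x1 ⊔ x2)) := rfl
@[simp] lemma iinf_lof_lof (x1 : L) (x2 : L) : (((.lof x1) : V L K) ⊓ (.lof x2)) = (.lof (x1 ⊓ x2)) := rfl
@[simp] lemma ile_lof_ak (x1 : L) (k2 : K) : (((.lof x1) : V L K) ≤ (.ak k2)) = False := rfl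
@[simp] lemma isup_lof_ak (x1 : L) (k2 : K) : (((.lof x1) : V L K) ⊔ (.ak k2)) = .top := rfl
@[simp] lemma iinf_lof_ak (x1 : L) (k2 : K) : (((.lof x1) : V L K) ⊓ (.ak k2)) = .bot := rfl
@[simp] lemma ile_lof_bk (x1 : L) (k2 : K) : (((.lof x1) : V L K) ≤ (.bk k2)) = False := rfl
@[simp] lemma isup_lof_bk (x1 : L) (k2 : K) : (((.lof x1) : V L K) ⊔ (.bk k2)) = .top := rfl
@[simp] lemma iinf_lof_bk (x1 : L) (k2 : K) : (((.lof x1) : V L K) ⊓ (.bk k2)) = .bot := rfl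
@[simp] lemma ile_ak_bot (k1 : K) : (((.ak k1) : V L K) ≤ .bot) = False := rfl
@[simp] lemma isup_ak_bot (k1 : K) : (((.ak k1) : V L K) ⊔ .bot) = (.ak k1) := rfl
@[simp] lemma iinf_ak_bot (k1 : K) : (((.ak k1) : V L K) ⊓ .bot) = .bot := rfl
@[simp] lemma ile_ak_top (k1 : K) : (((.ak k1) : V L K) ≤ .top) = True := rfl
@[simp] lemma isup_ak_top (k1 : K) : (((.ak k1) : V L K) ⊔ .top) = .top := rfl
@[simp] lemma iinf_ak_top (k1 : K) : (((.ak k1) : V L K) ⊓ .top) = (.ak k1) := rfl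
@[simp] lemma ile_ak_mid (k1 : K) (i2 : Fin 3) : (((.ak k1) : V L K) ≤ (.mid i2)) = False := rfl
@[simp] lemma isup_ak_mid (k1 : K) (i2 : Fin 3) : (((.ak k1) : V L K) ⊔ (.mid i2)) = .top := rfl
@[simp] lemma iinf_ak_mid (k1 : K) (i2 : Fin 3) : (((.ak k1) : V L K) ⊓ (.mid i2)) = .bot := rfl
@[simp] lemma ile_ak_tc (k1 : K) : (((.ak k1) : V L K) ≤ .tc) = False := rfl
@[simp] lemma isup_ak_tc (k1 : K) : (((.ak k1) : V L K) ⊔ .tc) = .top := rfl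
@[simp] lemma iinf_ak_tc (k1 : K) : (((.ak k1) : V L K) ⊓ .tc) = .bot := rfl
@[simp] lemma ile_ak_td (k1 : K) : (((.ak k1) : V L K) ≤ .td) = False := rfl
@[simp] lemma isup_ak_td (k1 : K) : (((.ak k1) : V L K) ⊔ .td) = .top := rfl
@[simp] lemma iinf_ak_td (k1 : K) : (((.ak k1) : V L K) ⊓ .td) = .bot := rfl
@[simp] lemma ile_ak_te (k1 : K) : (((.ak k1) : V L K) ≤ .te) = False := rfl
@[simp] lemma isup_ak_te (k1 : K) : (((.ak k1) : V L K) ⊔ .te) = .top := rfl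
@[simp] lemma iinf_ak_te (k1 : K) : (((.ak k1) : V L K) ⊓ .te) = .bot := rfl
@[simp] lemma ile_ak_lof (k1 : K) (x2 : L) : (((.ak k1) : V L K) ≤ (.lof x2)) = False := rfl
@[simp] lemma isup_ak_lof (k1 : K) (x2 : L) : (((.ak k1) : V L K) ⊔ (.lof x2)) = .top := rfl
@[simp] lemma iinf_ak_lof (k1 : K) (x2 : L) : (((.ak k1) : V L K) ⊓ (.lof x2)) = .bot := rfl
@[simp] lemma ile_ak_ak (k1 : K) (k2 : K) : (((.ak k1) : V L K) ≤ (.ak k2)) = (k1 = k2) := rfl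
@[simp] lemma isup_ak_ak (k1 : K) (k2 : K) : (((.ak k1) : V L K) ⊔ (.ak k2)) = (if k1 = k2 then V.ak k1 else .top) := rfl
@[simp] lemma iinf_ak_ak (k1 : K) (k2 : K) : (((.ak k1) : V L K) ⊓ (.ak k2)) = (if k1 = k2 then V.ak k1 else .bot) := rfl
@[simp] lemma ile_ak_bk (k1 : K) (k2 : K) : (((.ak k1) : V L K) ≤ (.bk k2)) = (k1 = k2) := rfl
@[simp] lemma isup_ak_bk (k1 : K) (k2 : K) : (((.ak k1) : V L K) ⊔ (.bk k2)) = (if k1 = k2 then V.bk k2 else .top) := rfl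
@[simp] lemma iinf_ak_bk (k1 : K) (k2 : K) : (((.ak k1) : V L K) ⊓ (.bk k2)) = (if k1 = k2 then V.ak k1 else .bot) := rfl
@[simp] lemma ile_bk_bot (k1 : K) : (((.bk k1) : V L K) ≤ .bot) = False := rfl
@[simp] lemma isup_bk_bot (k1 : K) : (((.bk k1) : V L K) ⊔ .bot) = (.bk k1) := rfl
@[simp] lemma iinf_bk_bot (k1 : K) : (((.bk k1) : V L K) ⊓ .bot) = .bot := rfl
@[simp] lemma ile_bk_top (k1 : K) : (((.bk k1) : V L K) ≤ .top) = True := rfl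
@[simp] lemma isup_bk_top (k1 : K) : (((.bk k1) : V L K) ⊔ .top) = .top := rfl
@[simp] lemma iinf_bk_top (k1 : K) : (((.bk k1) : V L K) ⊓ .top) = (.bk k1) := rfl
@[simp] lemma ile_bk_mid (k1 : K) (i2 : Fin 3) : (((.bk k1) : V L K) ≤ (.mid i2)) = False := rfl
@[simp] lemma isup_bk_mid (k1 : K) (i2 : Fin 3) : (((.bk k1) : V L K) ⊔ (.mid i2)) = .top := rfl
@[simp] lemma iinf_bk_mid (k1 : K) (i2 : Fin 3) : (((.bk k1) : V L K) ⊓ (.mid i2)) = .bot := rfl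
@[simp] lemma ile_bk_tc (k1 : K) : (((.bk k1) : V L K) ≤ .tc) = False := rfl
@[simp] lemma isup_bk_tc (k1 : K) : (((.bk k1) : V L K) ⊔ .tc) = .top := rfl
@[simp] lemma iinf_bk_tc (k1 : K) : (((.bk k1) : V L K) ⊓ .tc) = .bot := rfl
@[simp] lemma ile_bk_td (k1 : K) : (((.bk k1) : V L K) ≤ .td) = False := rfl
@[simp] lemma isup_bk_td (k1 : K) : (((.bk k1) : V L K) ⊔ .td) = .top := rfl
@[simp] lemma iinf_bk_td (k1 : K) : (((.bk k1) : V L K) ⊓ .td) = .bot := rfl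
@[simp] lemma ile_bk_te (k1 : K) : (((.bk k1) : V L K) ≤ .te) = False := rfl
@[simp] lemma isup_bk_te (k1 : K) : (((.bk k1) : V L K) ⊔ .te) = .top := rfl
@[simp] lemma iinf_bk_te (k1 : K) : (((.bk k1) : V L K) ⊓ .te) = .bot := rfl
@[simp] lemma ile_bk_lof (k1 : K) (x2 : L) : (((.bk k1) : V L K) ≤ (.lof x2)) = False := rfl
@[simp] lemma isup_bk_lof (k1 : K) (x2 : L) : (((.bk k1) : V L K) ⊔ (.lof x2)) = .top := rfl
@[simp] lemma iinf_bk_lof (k1 : K) (x2 : L) : (((.bk k1) : V L K) ⊓ (.lof x2)) = .bot := rfl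
@[simp] lemma ile_bk_ak (k1 : K) (k2 : K) : (((.bk k1) : V L K) ≤ (.ak k2)) = False := rfl
@[simp] lemma isup_bk_ak (k1 : K) (k2 : K) : (((.bk k1) : V L K) ⊔ (.ak k2)) = (if k1 = k2 then V.bk k1 else .top) := rfl
@[simp] lemma iinf_bk_ak (k1 : K) (k2 : K) : (((.bk k1) : V L K) ⊓ (.ak k2)) = (if k1 = k2 then V.ak k2 else .bot) := rfl
@[simp] lemma ile_bk_bk (k1 : K) (k2 : K) : (((.bk k1) : V L K) ≤ (.bk k2)) = (k1 = k2) := rfl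
@[simp] lemma isup_bk_bk (k1 : K) (k2 : K) : (((.bk k1) : V L K) ⊔ (.bk k2)) = (if k1 = k2 then V.bk k1 else .top) := rfl
@[simp] lemma iinf_bk_bk (k1 : K) (k2 : K) : (((.bk k1) : V L K) ⊓ (.bk k2)) = (if k1 = k2 then V.bk k1 else .bot) := rfl
end SimpLemmas2

variable {L : Type u} {K : Type w} [Lattice L]

@[simp] lemma le_def (x y : V L K) : (x ≤ y) ↔ le x y := Iff.rfl
lemma sup_def (x y : V L K) : x ⊔ y = sup x y := rfl
lemma inf_def (x y : V L K) : x ⊓ y = inf x y := rfl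

@[simp] lemma sup_bot_left (x : V L K) : sup .bot x = x := by cases x <;> simp
@[simp] lemma sup_bot_right (x : V L K) : sup x .bot = x := by cases x <;> simp
@[simp] lemma sup_top_left (x : V L K) : sup .top x = .top := by cases x <;> simp
@[simp] lemma sup_top_right (x : V L K) : sup x .top = .top := by cases x <;> simp
@[simp] lemma inf_bot_left (x : V L K) : inf .bot x = .bot := by cases x <;> simp
@[simp] lemma inf_bot_right (x : V L K) : inf x .bot = .bot := by cases x <;> simp
@[simp] lemma inf_top_left (x : V L K) : inf .top x = x := by cases x <;> simp
@[simp] lemma inf_top_right (x : V L K) : inf x .top = x := by cases x <;> simp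

lemma vbot_le (x : V L K) : (.bot : V L K) ≤ x := by simp
lemma vle_top (x : V L K) : x ≤ (.top : V L K) := by simp

lemma isBot_bot : IsBot (V.bot : V L K) := fun x => vbot_le x
lemma isTop_top : IsTop (V.top : V L K) := fun x => vle_top x

section Con
variable {r : V L K → V L K → Prop} (hr : IsLatCon r)
include hr

lemma conn_step1 {i j : Fin 3} (hij : i ≠ j) (h : r .bot (.mid i)) :
    r (.mid j) .top := by
  have := hr.2.2 _ _ _ _ h (hr.1.refl (V.mid j : V L K))
  rw [sup_def, sup_def] at this
  simpa [hij] using this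

lemma conn_step2 {i j : Fin 3} (hij : i ≠ j) (h : r (.mid i) .top) :
    r .bot (.mid j) := by
  have := hr.2.1 _ _ _ _ h (hr.1.refl (V.mid j : V L K))
  rw [inf_def, inf_def] at this
  simpa [hij] using this

lemma conn_bot_top_of_mid {i : Fin 3} (h : r .bot (.mid i)) : r .bot .top := by
  obtain ⟨j, l, hij, hil, hjl⟩ :=
    (by decide : ∀ i : Fin 3, ∃ j l : Fin 3, i ≠ j ∧ i ≠ l ∧ j ≠ l) i
  have h1 : r (.mid j) .top := conn_step1 hr hij h
  have h2 : r .bot (.mid l) := conn_step2 hr hjl h1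
  have h3 : r (.mid i) .top := conn_step1 hr (Ne.symm hil) h2
  exact hr.1.trans h h3

lemma conn_of_bot {x : V L K} (hx : x ≠ .bot) (h : r .bot x) : r .bot .top := by
  cases x with
  | bot => exact absurd rfl hx
  | top => exact h
  | mid i => exact conn_bot_top_of_mid hr h
  | _ =>
    have h1 : r (.mid 0) .top := by
      have := hr.2.2 _ _ _ _ h (hr.1.refl (V.mid 0 : V L K))
      rw [sup_def, sup_def] at this
      simpa using this
    exact conn_bot_top_of_mid hr (conn_step2 hr (by decide : (0:Fin 3) ≠ 1) h1)

lemma conn_of_top {x : V L K} (hx : x ≠ .top) (h : r x .top) : r .bot .top := by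
  cases x with
  | top => exact absurd rfl hx
  | bot => exact h
  | mid i =>
    obtain ⟨j, hij⟩ := (by decide : ∀ i : Fin 3, ∃ j, i ≠ j) i
    exact conn_bot_top_of_mid hr (conn_step2 hr hij h)
  | _ =>
    have h1 : r .bot (.mid 0) := by
      have := hr.2.1 _ _ _ _ h (hr.1.refl (V.mid 0 : V L K))
      rw [inf_def, inf_def] at this
      simpa using this
    exact conn_bot_top_of_mid hr h1

lemma conn_full (h : r .bot .top) : ∀ x y : V L K, r x y := by
  have hx : ∀ x : V L K, r x .top := by
    intro x
    have := hr.2.2 _ _ _ _ h (hr.1.refl x)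
    rw [sup_def, sup_def] at this
    simpa using this
  intro x y
  exact hr.1.trans (hx x) (hr.1.symm (hx y))

end Con


section CG
variable {α : Type*} [Lattice α]

lemma eq_latcon : IsLatCon (fun x y : α => x = y) :=
  ⟨eq_equivalence, fun _ _ _ _ h1 h2 => by rw [h1, h2], fun _ _ _ _ h1 h2 => by rw [h1, h2]⟩

lemma cg_latcon (a b : α) : IsLatCon (cg a b) := by
  refine ⟨⟨fun x r hr _ => hr.1.refl x, fun h r hr hab => hr.1.symm (h r hr hab),
    fun h1 h2 r hr hab => hr.1.trans (h1 r hr hab) (h2 r hr hab)⟩,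
    fun x y z w h1 h2 r hr hab => hr.2.1 _ _ _ _ (h1 r hr hab) (h2 r hr hab),
    fun x y z w h1 h2 r hr hab => hr.2.2 _ _ _ _ (h1 r hr hab) (h2 r hr hab)⟩

lemma cg_rel (a b : α) : cg a b a b := fun _ _ h => h

lemma cg_rfl (a b x : α) : cg a b x x := fun _ hr _ => hr.1.refl x

lemma cg_diag_iff (u x y : α) : cg u u x y ↔ x = y := by
  constructor
  · intro h; exact h Eq eq_latcon rfl
  · rintro rfl; exact cg_rfl _ _ _

end CG

/-- extension of a congruence of `L` to `V L K`. -/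
def extC (θ : L → L → Prop) : V L K → V L K → Prop := fun u v =>
  (∃ x y, u = .lof x ∧ v = .lof y ∧ θ x y) ∨ u = v

lemma extC_latcon {θ : L → L → Prop} (hθ : IsLatCon θ) : IsLatCon (extC (K := K) θ) := by
  constructor
  · constructor
    · intro x; exact Or.inr rfl
    · rintro x y (⟨a, b, rfl, rfl, h⟩ | rfl)
      · exact Or.inl ⟨b, a, rfl, rfl, hθ.1.symm h⟩
      · exact Or.inr rfl
    · rintro x y z (⟨a, b, rfl, rfl, h⟩ | rfl) h2
      · rcases h2 with ⟨b', c, hb, rfl, h'⟩ | rfl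
        · cases hb; exact Or.inl ⟨a, c, rfl, rfl, hθ.1.trans h h'⟩
        · exact Or.inl ⟨a, b, rfl, rfl, h⟩
      · exact h2
  constructor
  · rintro a b c d (⟨x, y, rfl, rfl, h⟩ | rfl) (⟨x', y', rfl, rfl, h'⟩ | rfl)
    · exact Or.inl ⟨x ⊓ x', y ⊓ y', rfl, rfl, hθ.2.1 _ _ _ _ h h'⟩
    · cases c with
      | lof z => exact Or.inl ⟨x ⊓ z, y ⊓ z, rfl, rfl, hθ.2.1 _ _ _ _ h (hθ.1.refl z)⟩
      | top => exact Or.inl ⟨x, y, rfl, rfl, h⟩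
      | _ => exact Or.inr rfl
    · cases a with
      | lof z => exact Or.inl ⟨z ⊓ x', z ⊓ y', rfl, rfl, hθ.2.1 _ _ _ _ (hθ.1.refl z) h'⟩
      | top => exact Or.inl ⟨x', y', rfl, rfl, h'⟩
      | _ => exact Or.inr rfl
    · exact Or.inr rfl
  · rintro a b c d (⟨x, y, rfl, rfl, h⟩ | rfl) (⟨x', y', rfl, rfl, h'⟩ | rfl)
    · exact Or.inl ⟨x ⊔ x', y ⊔ y', rfl, rfl, hθ.2.2 _ _ _ _ h h'⟩
    · cases c with
      | lof z => exact Or.inl ⟨x ⊔ z, y ⊔ z, rfl, rfl, hθ.2.2 _ _ _ _ h (hθ.1.refl z)⟩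
      | bot => exact Or.inl ⟨x, y, rfl, rfl, h⟩
      | _ => exact Or.inr rfl
    · cases a with
      | lof z => exact Or.inl ⟨z ⊔ x', z ⊔ y', rfl, rfl, hθ.2.2 _ _ _ _ (hθ.1.refl z) h'⟩
      | bot => exact Or.inl ⟨x', y', rfl, rfl, h'⟩
      | _ => exact Or.inr rfl
    · exact Or.inr rfl

lemma cg_lof_iff (x y : L) (u v : V L K) :
    cg (V.lof x) (V.lof y) u v ↔ extC (cg x y) u v := by
  constructor
  · intro h
    exact h (extC (cg x y)) (extC_latcon (cg_latcon x y)) (Or.inl ⟨x, y, rfl, rfl, cg_rel x y⟩)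
  · rintro (⟨a, b, rfl, rfl, h⟩ | rfl)
    · intro r hr hxy
      have h0 : IsLatCon (fun a b : L => r (.lof a) (.lof b)) := by
        refine ⟨⟨fun z => hr.1.refl _, fun h => hr.1.symm h, fun h1 h2 => hr.1.trans h1 h2⟩,
          fun a b c d h1 h2 => ?_, fun a b c d h1 h2 => ?_⟩
        · have := hr.2.1 _ _ _ _ h1 h2; simpa [inf_def] using this
        · have := hr.2.2 _ _ _ _ h1 h2; simpa [sup_def] using this
      exact h _ h0 hxy
    · exact cg_rfl _ _ _

/-- the congruence collapsing exactly `ak k ∼ bk k`. -/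
def Ek (k : K) : V L K → V L K → Prop := fun u v =>
  u = v ∨ (u = .ak k ∧ v = .bk k) ∨ (u = .bk k ∧ v = .ak k)

lemma Ek_latcon (k : K) : IsLatCon (Ek (L := L) k) := by
  have heq : Equivalence (Ek (L := L) (K := K) k) := by
    constructor
    · intro x; exact Or.inl rfl
    · rintro x y (rfl | ⟨rfl, rfl⟩ | ⟨rfl, rfl⟩) <;> simp [Ek]
    · rintro x y z (rfl | ⟨rfl, rfl⟩ | ⟨rfl, rfl⟩) (rfl | ⟨h1, rfl⟩ | ⟨h1, rfl⟩) <;>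
        simp_all [Ek]
  refine ⟨heq, ?_, ?_⟩
  · rintro a b c d (rfl | ⟨rfl, rfl⟩ | ⟨rfl, rfl⟩) (rfl | ⟨rfl, rfl⟩ | ⟨rfl, rfl⟩)
    · exact Or.inl rfl
    · cases a with
      | ak k' | bk k' =>
        rw [inf_def, inf_def]
        by_cases h : k' = k <;> simp [Ek, h]
      | top => simp [Ek, inf_def]
      | _ => simp [Ek, inf_def]
    · cases a with
      | ak k' | bk k' =>
        rw [inf_def, inf_def]
        by_cases h : k' = k <;> simp [Ek, h]
      | top => simp [Ek, inf_def]
      | _ => simp [Ek, inf_def]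
    · cases c with
      | ak k' | bk k' =>
        rw [inf_def, inf_def]
        by_cases h : k = k' <;> simp [Ek, h]
      | top => simp [Ek, inf_def]
      | _ => simp [Ek, inf_def]
    · rw [inf_def, inf_def]; simp [Ek]
    · rw [inf_def, inf_def]; simp [Ek]
    · cases c with
      | ak k' | bk k' =>
        rw [inf_def, inf_def]
        by_cases h : k = k' <;> simp [Ek, h]
      | top => simp [Ek, inf_def]
      | _ => simp [Ek, inf_def]
    · rw [inf_def, inf_def]; simp [Ek]
    · rw [inf_def, inf_def]; simp [Ek]
  · rintro a b c d (rfl | ⟨rfl, rfl⟩ | ⟨rfl, rfl⟩) (rfl | ⟨rfl, rfl⟩ | ⟨rfl, rfl⟩)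
    · exact Or.inl rfl
    · cases a with
      | ak k' | bk k' =>
        rw [sup_def, sup_def]
        by_cases h : k' = k <;> simp [Ek, h]
      | bot => simp [Ek, sup_def]
      | _ => simp [Ek, sup_def]
    · cases a with
      | ak k' | bk k' =>
        rw [sup_def, sup_def]
        by_cases h : k' = k <;> simp [Ek, h]
      | bot => simp [Ek, sup_def]
      | _ => simp [Ek, sup_def]
    · cases c with
      | ak k' | bk k' =>
        rw [sup_def, sup_def]
        by_cases h : k = k' <;> simp [Ek, h]
      | bot => simp [Ek, sup_def]
      | _ => simp [Ek, sup_def]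
    · rw [sup_def, sup_def]; simp [Ek]
    · rw [sup_def, sup_def]; simp [Ek]
    · cases c with
      | ak k' | bk k' =>
        rw [sup_def, sup_def]
        by_cases h : k = k' <;> simp [Ek, h]
      | bot => simp [Ek, sup_def]
      | _ => simp [Ek, sup_def]
    · rw [sup_def, sup_def]; simp [Ek]
    · rw [sup_def, sup_def]; simp [Ek]

lemma cg_ak_iff (k : K) (u v : V L K) :
    cg (V.ak k) (V.bk k) u v ↔ Ek k u v := by
  constructor
  · intro h; exact h (Ek k) (Ek_latcon k) (Or.inr (Or.inl ⟨rfl, rfl⟩))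
  · rintro (rfl | ⟨rfl, rfl⟩ | ⟨rfl, rfl⟩)
    · exact cg_rfl _ _ _
    · exact cg_rel _ _
    · intro r hr h; exact hr.1.symm h


section Build
variable {H : Type v} (A : AuxStr L H)

def zero' : (H ⊕ K) ⊕ Unit := Sum.inl (Sum.inl A.zero)

def one' (H : Type v) (K : Type w) : (H ⊕ K) ⊕ Unit := Sum.inr ()

/-- the generating relation for the extended quasiorder. -/
def Rrel : ((H ⊕ K) ⊕ Unit) → ((H ⊕ K) ⊕ Unit) → Prop := fun x y =>
  (∃ a b : H, A.ν a b ∧ x = Sum.inl (Sum.inl a) ∧ y = Sum.inl (Sum.inl b)) ∨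
  x = Sum.inl (Sum.inl A.zero) ∨ y = Sum.inr ()

/-- explicit description of the quasiorder closure. -/
def nuEx : ((H ⊕ K) ⊕ Unit) → ((H ⊕ K) ⊕ Unit) → Prop := fun p q =>
  q = Sum.inr () ∨ p = Sum.inl (Sum.inl A.zero) ∨
  (∃ a b : H, p = Sum.inl (Sum.inl a) ∧ q = Sum.inl (Sum.inl b) ∧ A.ν a b) ∨ p = q

lemma A_trans : Transitive A.ν := A.quasi.2.1
lemma A_refl : Reflexive A.ν := A.quasi.1

lemma A_nu_zero {a : H} (h : A.ν a A.zero) : a = A.zero :=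
  A.least_unique a (fun x => A_trans A h (A.zero_least x))

lemma nuEx_refl : Reflexive (nuEx (K := K) A) := fun p => Or.inr (Or.inr (Or.inr rfl))

lemma nuEx_trans : Transitive (nuEx (K := K) A) := by
  rintro p q s (rfl | rfl | ⟨a, b, rfl, rfl, hab⟩ | rfl) h2
  · rcases h2 with h | h | ⟨a, b, h, rfl, hab⟩ | rfl
    · exact Or.inl h
    · simp at h
    · simp at h
    · exact Or.inl rfl
  · exact Or.inr (Or.inl rfl)
  · rcases h2 with rfl | h | ⟨a', b', ha, rfl, hab'⟩ | rfl
    · exact Or.inl rfl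
    · obtain rfl : b = A.zero := by simpa using h
      exact Or.inr (Or.inl (by rw [A_nu_zero A hab]))
    · obtain rfl : b = a' := by simpa using ha
      exact Or.inr (Or.inr (Or.inl ⟨a, b', rfl, rfl, A_trans A hab hab'⟩))
    · exact Or.inr (Or.inr (Or.inl ⟨a, b, rfl, rfl, hab⟩))
  · exact h2

lemma nu_iff (p q : (H ⊕ K) ⊕ Unit) : quoClosure (Rrel (K := K) A) p q ↔ nuEx A p q := by
  constructor
  · intro h
    refine h (nuEx A) (nuEx_refl A) (nuEx_trans A) ?_
    rintro a b (⟨x, y, hxy, rfl, rfl⟩ | rfl | rfl)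
    · exact Or.inr (Or.inr (Or.inl ⟨x, y, rfl, rfl, hxy⟩))
    · exact Or.inr (Or.inl rfl)
    · exact Or.inl rfl
  · rintro (rfl | rfl | ⟨a, b, rfl, rfl, hab⟩ | rfl)
    · intro μ hrefl htrans hR; exact hR _ _ (Or.inr (Or.inr rfl))
    · intro μ hrefl htrans hR; exact hR _ _ (Or.inr (Or.inl rfl))
    · intro μ hrefl htrans hR; exact hR _ _ (Or.inl ⟨a, b, hab, rfl, rfl⟩)
    · intro μ hrefl _ _; exact hrefl p

lemma A_gamma_self (x : L) : A.γ x x = A.zero := by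
  have hsub : ∀ a b : L, cg x x a b → cg (A.δ A.zero) (A.ε A.zero) a b := by
    intro a b hab
    obtain rfl : a = b := (cg_diag_iff x a b).1 hab
    exact cg_rfl _ _ _
  have h := A.quasi.2.2.2.2 x x (A.δ A.zero) (A.ε A.zero) le_rfl (le_of_eq A.delta_zero) hsub
  rw [A.gamma_delta] at h
  exact A.least_unique _ (fun q => A_trans A h (A.zero_least q))

lemma A_gamma_zero {x y : L} (hxy : x ≤ y) (h : A.γ x y = A.zero) : x = y := by
  have h1 := A.quasi.2.2.2.1 x y (A.δ A.zero) (A.ε A.zero) hxy (le_of_eq A.delta_zero)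
    (by rw [A.gamma_delta, h]; exact A_refl A _)
  have h2 := h1 x y (cg_rel x y)
  have h3 : cg (A.δ A.zero) (A.δ A.zero) x y := by
    rw [A.delta_zero] at h2 ⊢
    exact h2
  exact (cg_diag_iff _ x y).1 h3

/-- the coloring of the extended lattice. -/
def gam : V L K → V L K → (H ⊕ K) ⊕ Unit
  | .lof x, .lof y => Sum.inl (Sum.inl (A.γ x y))
  | .ak k, .bk _ => Sum.inl (Sum.inr k)
  | .bot, .bot => zero' A
  | .top, .top => zero' A
  | .mid _, .mid _ => zero' A
  | .tc, .tc => zero' A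
  | .td, .td => zero' A
  | .te, .te => zero' A
  | .ak _, .ak _ => zero' A
  | .bk _, .bk _ => zero' A
  | _, _ => one' H K

def del : (H ⊕ K) ⊕ Unit → V L K
  | .inl (.inl h) => .lof (A.δ h)
  | .inl (.inr k) => .ak k
  | .inr _ => .td

def eps : (H ⊕ K) ⊕ Unit → V L K
  | .inl (.inl h) => .lof (A.ε h)
  | .inl (.inr k) => .bk k
  | .inr _ => .te

lemma gam_refl (u : V L K) : gam A u u = zero' A := by
  cases u <;> simp [gam, A_gamma_self, zero']

lemma classify (u v : V L K) (huv : u ≤ v) :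
    (∃ x y : L, x ≤ y ∧ u = .lof x ∧ v = .lof y) ∨
    (∃ k : K, u = .ak k ∧ v = .bk k) ∨
    u = v ∨
    ((∀ r, IsLatCon r → r u v → ∀ a b, r a b) ∧ gam A u v = one' H K) := by
  rw [le_def] at huv
  cases u <;> cases v <;> (try simp at huv) <;>
    first
    | (exact Or.inl ⟨_, _, huv, rfl, rfl⟩)
    | (first | subst huv | skip
       first
       | exact Or.inr (Or.inr (Or.inl rfl))
       | exact Or.inr (Or.inl ⟨_, rfl, rfl⟩))
    | (refine Or.inr (Or.inr (Or.inr ⟨?_, rfl⟩))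
       intro r hr h
       first
       | exact conn_full hr (conn_of_bot hr (by simp) h)
       | exact conn_full hr (conn_of_top hr (by simp) h)
       | (have hbt : r .bot (.td : V L K) := by
            have := hr.2.1 _ _ _ _ h (hr.1.refl (V.td : V L K))
            rw [inf_def, inf_def] at this
            simpa using this
          exact conn_full hr (conn_of_bot hr (by simp) hbt))
       | (have hbt : r .bot (.tc : V L K) := by
            have := hr.2.1 _ _ _ _ h (hr.1.refl (V.tc : V L K))
            rw [inf_def, inf_def] at this
            simpa using this
          exact conn_full hr (conn_of_bot hr (by simp) hbt)))

end Build


noncomputable instance : Bot (V L K) := ⟨.bot⟩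
noncomputable instance : OrderBot (V L K) := ⟨fun x => vbot_le x⟩
noncomputable instance : Top (V L K) := ⟨.top⟩
noncomputable instance : OrderTop (V L K) := ⟨fun x => vle_top x⟩

@[simp] lemma vsup_bot_left (x : V L K) : (.bot : V L K) ⊔ x = x := by rw [sup_def]; simp
@[simp] lemma vsup_bot_right (x : V L K) : x ⊔ (.bot : V L K) = x := by rw [sup_def]; simp
@[simp] lemma vsup_top_left (x : V L K) : (.top : V L K) ⊔ x = .top := by rw [sup_def]; simp
@[simp] lemma vsup_top_right (x : V L K) : x ⊔ (.top : V L K) = .top := by rw [sup_def]; simp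
@[simp] lemma vinf_bot_left (x : V L K) : (.bot : V L K) ⊓ x = .bot := by rw [inf_def]; simp
@[simp] lemma vinf_bot_right (x : V L K) : x ⊓ (.bot : V L K) = .bot := by rw [inf_def]; simp
@[simp] lemma vinf_top_left (x : V L K) : (.top : V L K) ⊓ x = x := by rw [inf_def]; simp
@[simp] lemma vinf_top_right (x : V L K) : x ⊓ (.top : V L K) = x := by rw [inf_def]; simp

/-- the congruence collapsing the `L`-component and each `{ak k, bk k}` block. -/
def Th : V L K → V L K → Prop := fun u v =>
  u = v ∨ (∃ x y : L, u = .lof x ∧ v = .lof y) ∨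
  (∃ k : K, (u = .ak k ∨ u = .bk k) ∧ (v = .ak k ∨ v = .bk k))

lemma Th_inf_lof_left (x y : L) (c : V L K) : Th (V.lof x ⊓ c) (V.lof y ⊓ c) := by
  cases c with
  | lof z => exact Or.inr (Or.inl ⟨x ⊓ z, y ⊓ z, rfl, rfl⟩)
  | top => exact Or.inr (Or.inl ⟨x, y, rfl, rfl⟩)
  | _ => exact Or.inl rfl

lemma Th_inf_lof_right (x y : L) (c : V L K) : Th (c ⊓ V.lof x) (c ⊓ V.lof y) := by
  cases c with
  | lof z => exact Or.inr (Or.inl ⟨z ⊓ x, z ⊓ y, rfl, rfl⟩)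
  | top => exact Or.inr (Or.inl ⟨x, y, rfl, rfl⟩)
  | _ => exact Or.inl rfl

lemma Th_sup_lof_left (x y : L) (c : V L K) : Th (V.lof x ⊔ c) (V.lof y ⊔ c) := by
  cases c with
  | lof z => exact Or.inr (Or.inl ⟨x ⊔ z, y ⊔ z, rfl, rfl⟩)
  | bot => exact Or.inr (Or.inl ⟨x, y, rfl, rfl⟩)
  | _ => exact Or.inl rfl

lemma Th_sup_lof_right (x y : L) (c : V L K) : Th (c ⊔ V.lof x) (c ⊔ V.lof y) := by
  cases c with
  | lof z => exact Or.inr (Or.inl ⟨z ⊔ x, z ⊔ y, rfl, rfl⟩)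
  | bot => exact Or.inr (Or.inl ⟨x, y, rfl, rfl⟩)
  | _ => exact Or.inl rfl

lemma Th_inf_blk_left {k : K} {u v : V L K} (hu : u = .ak k ∨ u = .bk k)
    (hv : v = .ak k ∨ v = .bk k) (c : V L K) : Th (u ⊓ c) (v ⊓ c) := by
  cases c with
  | top =>
    rcases hu with rfl | rfl <;> rcases hv with rfl | rfl <;>
      exact Or.inr (Or.inr ⟨k, by simp, by simp⟩)
  | ak k' =>
    by_cases h : k = k'
    · subst h
      rcases hu with rfl | rfl <;> rcases hv with rfl | rfl <;>
        simp <;>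
        first
        | exact Or.inl rfl
        | exact Or.inr (Or.inr ⟨k, by simp, by simp⟩)
    · rcases hu with rfl | rfl <;> rcases hv with rfl | rfl <;>
        simp [h] <;> exact Or.inl rfl
  | bk k' =>
    by_cases h : k = k'
    · subst h
      rcases hu with rfl | rfl <;> rcases hv with rfl | rfl <;>
        simp <;>
        first
        | exact Or.inl rfl
        | exact Or.inr (Or.inr ⟨k, by simp, by simp⟩)
    · rcases hu with rfl | rfl <;> rcases hv with rfl | rfl <;>
        simp [h] <;> exact Or.inl rfl
  | _ => rcases hu with rfl | rfl <;> rcases hv with rfl | rfl <;> exact Or.inl rfl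

lemma Th_inf_blk_right {k : K} {u v : V L K} (hu : u = .ak k ∨ u = .bk k)
    (hv : v = .ak k ∨ v = .bk k) (c : V L K) : Th (c ⊓ u) (c ⊓ v) := by
  cases c with
  | top =>
    rcases hu with rfl | rfl <;> rcases hv with rfl | rfl <;>
      exact Or.inr (Or.inr ⟨k, by simp, by simp⟩)
  | ak k' =>
    by_cases h : k' = k
    · subst h
      rcases hu with rfl | rfl <;> rcases hv with rfl | rfl <;>
        simp <;>
        first
        | exact Or.inl rfl
        | exact Or.inr (Or.inr ⟨k', by simp, by simp⟩)
    · rcases hu with rfl | rfl <;> rcases hv with rfl | rfl <;>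
        simp [h] <;> exact Or.inl rfl
  | bk k' =>
    by_cases h : k' = k
    · subst h
      rcases hu with rfl | rfl <;> rcases hv with rfl | rfl <;>
        simp <;>
        first
        | exact Or.inl rfl
        | exact Or.inr (Or.inr ⟨k', by simp, by simp⟩)
    · rcases hu with rfl | rfl <;> rcases hv with rfl | rfl <;>
        simp [h] <;> exact Or.inl rfl
  | _ => rcases hu with rfl | rfl <;> rcases hv with rfl | rfl <;> exact Or.inl rfl

lemma Th_sup_blk_left {k : K} {u v : V L K} (hu : u = .ak k ∨ u = .bk k)
    (hv : v = .ak k ∨ v = .bk k) (c : V L K) : Th (u ⊔ c) (v ⊔ c) := by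
  cases c with
  | bot =>
    rcases hu with rfl | rfl <;> rcases hv with rfl | rfl <;>
      exact Or.inr (Or.inr ⟨k, by simp, by simp⟩)
  | ak k' =>
    by_cases h : k = k'
    · subst h
      rcases hu with rfl | rfl <;> rcases hv with rfl | rfl <;>
        simp <;>
        first
        | exact Or.inl rfl
        | exact Or.inr (Or.inr ⟨k, by simp, by simp⟩)
    · rcases hu with rfl | rfl <;> rcases hv with rfl | rfl <;>
        simp [h] <;> exact Or.inl rfl
  | bk k' =>
    by_cases h : k = k'
    · subst h
      rcases hu with rfl | rfl <;> rcases hv with rfl | rfl <;>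
        simp <;>
        first
        | exact Or.inl rfl
        | exact Or.inr (Or.inr ⟨k, by simp, by simp⟩)
    · rcases hu with rfl | rfl <;> rcases hv with rfl | rfl <;>
        simp [h] <;> exact Or.inl rfl
  | _ => rcases hu with rfl | rfl <;> rcases hv with rfl | rfl <;> exact Or.inl rfl

lemma Th_sup_blk_right {k : K} {u v : V L K} (hu : u = .ak k ∨ u = .bk k)
    (hv : v = .ak k ∨ v = .bk k) (c : V L K) : Th (c ⊔ u) (c ⊔ v) := by
  cases c with
  | bot =>
    rcases hu with rfl | rfl <;> rcases hv with rfl | rfl <;>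
      exact Or.inr (Or.inr ⟨k, by simp, by simp⟩)
  | ak k' =>
    by_cases h : k' = k
    · subst h
      rcases hu with rfl | rfl <;> rcases hv with rfl | rfl <;>
        simp <;>
        first
        | exact Or.inl rfl
        | exact Or.inr (Or.inr ⟨k', by simp, by simp⟩)
    · rcases hu with rfl | rfl <;> rcases hv with rfl | rfl <;>
        simp [h] <;> exact Or.inl rfl
  | bk k' =>
    by_cases h : k' = k
    · subst h
      rcases hu with rfl | rfl <;> rcases hv with rfl | rfl <;>
        simp <;>
        first
        | exact Or.inl rfl
        | exact Or.inr (Or.inr ⟨k', by simp, by simp⟩)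
    · rcases hu with rfl | rfl <;> rcases hv with rfl | rfl <;>
        simp [h] <;> exact Or.inl rfl
  | _ => rcases hu with rfl | rfl <;> rcases hv with rfl | rfl <;> exact Or.inl rfl

lemma Th_latcon : IsLatCon (Th (L := L) (K := K)) := by
  have hsym : ∀ u v : V L K, Th u v → Th v u := by
    rintro u v (rfl | ⟨x, y, rfl, rfl⟩ | ⟨k, hu, hv⟩)
    · exact Or.inl rfl
    · exact Or.inr (Or.inl ⟨y, x, rfl, rfl⟩)
    · exact Or.inr (Or.inr ⟨k, hv, hu⟩)
  refine ⟨⟨fun x => Or.inl rfl, fun h => hsym _ _ h, ?_⟩, ?_, ?_⟩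
  · rintro u v w (rfl | ⟨x, y, rfl, rfl⟩ | ⟨k, hu, hv⟩) h2
    · exact h2
    · rcases h2 with rfl | ⟨x', y', hx, rfl⟩ | ⟨k, hv, hw⟩
      · exact Or.inr (Or.inl ⟨x, y, rfl, rfl⟩)
      · exact Or.inr (Or.inl ⟨x, y', rfl, rfl⟩)
      · rcases hv with hv | hv <;> simp at hv
    · rcases h2 with rfl | ⟨x', y', hx, rfl⟩ | ⟨k', hv', hw⟩
      · exact Or.inr (Or.inr ⟨k, hu, hv⟩)
      · rcases hv with hv | hv <;> simp [hv] at hx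
      · obtain rfl : k = k' := by
          rcases hv with rfl | rfl <;> rcases hv' with hv' | hv' <;> simp_all
        exact Or.inr (Or.inr ⟨k, hu, hw⟩)
  · rintro a b c d (rfl | ⟨x, y, rfl, rfl⟩ | ⟨k, hu, hv⟩) h2
    · rcases h2 with rfl | ⟨x, y, rfl, rfl⟩ | ⟨k, hc, hd⟩
      · exact Or.inl rfl
      · exact Th_inf_lof_right x y a
      · exact Th_inf_blk_right hc hd a
    · rcases h2 with rfl | ⟨x', y', rfl, rfl⟩ | ⟨k, hc, hd⟩
      · exact Th_inf_lof_left x y c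
      · exact Or.inr (Or.inl ⟨x ⊓ x', y ⊓ y', rfl, rfl⟩)
      · rcases hc with rfl | rfl <;> rcases hd with rfl | rfl <;> exact Or.inl rfl
    · rcases h2 with rfl | ⟨x', y', rfl, rfl⟩ | ⟨k', hc, hd⟩
      · exact Th_inf_blk_left hu hv c
      · rcases hu with rfl | rfl <;> rcases hv with rfl | rfl <;> exact Or.inl rfl
      · by_cases h : k = k'
        · subst h
          rcases hu with rfl | rfl <;> rcases hv with rfl | rfl <;>
            rcases hc with rfl | rfl <;> rcases hd with rfl | rfl <;>
            simp <;>
            first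
            | exact Or.inl rfl
            | exact Or.inr (Or.inr ⟨k, by simp, by simp⟩)
        · rcases hu with rfl | rfl <;> rcases hv with rfl | rfl <;>
            rcases hc with rfl | rfl <;> rcases hd with rfl | rfl <;>
            simp [h] <;> exact Or.inl rfl
  · rintro a b c d (rfl | ⟨x, y, rfl, rfl⟩ | ⟨k, hu, hv⟩) h2
    · rcases h2 with rfl | ⟨x, y, rfl, rfl⟩ | ⟨k, hc, hd⟩
      · exact Or.inl rfl
      · exact Th_sup_lof_right x y a
      · exact Th_sup_blk_right hc hd a
    · rcases h2 with rfl | ⟨x', y', rfl, rfl⟩ | ⟨k, hc, hd⟩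
      · exact Th_sup_lof_left x y c
      · exact Or.inr (Or.inl ⟨x ⊔ x', y ⊔ y', rfl, rfl⟩)
      · rcases hc with rfl | rfl <;> rcases hd with rfl | rfl <;> exact Or.inl rfl
    · rcases h2 with rfl | ⟨x', y', rfl, rfl⟩ | ⟨k', hc, hd⟩
      · exact Th_sup_blk_left hu hv c
      · rcases hu with rfl | rfl <;> rcases hv with rfl | rfl <;> exact Or.inl rfl
      · by_cases h : k = k'
        · subst h
          rcases hu with rfl | rfl <;> rcases hv with rfl | rfl <;>
            rcases hc with rfl | rfl <;> rcases hd with rfl | rfl <;>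
            simp <;>
            first
            | exact Or.inl rfl
            | exact Or.inr (Or.inr ⟨k, by simp, by simp⟩)
        · rcases hu with rfl | rfl <;> rcases hv with rfl | rfl <;>
            rcases hc with rfl | rfl <;> rcases hd with rfl | rfl <;>
            simp [h] <;> exact Or.inl rfl


lemma ncard_six {α : Type*} {a b c d e f : α} (hab : a ≠ b) (hac : a ≠ c) (had : a ≠ d)
    (hae : a ≠ e) (haf : a ≠ f) (hbc : b ≠ c) (hbd : b ≠ d) (hbe : b ≠ e) (hbf : b ≠ f)
    (hcd : c ≠ d) (hce : c ≠ e) (hcf : c ≠ f) (hde : d ≠ e) (hdf : d ≠ f) (hef : e ≠ f) :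
    ({a, b, c, d, e, f} : Set α).ncard = 6 := by
  rw [Set.ncard_insert_of_notMem (by simp [hab, hac, had, hae, haf]) (Set.toFinite _),
    Set.ncard_insert_of_notMem (by simp [hbc, hbd, hbe, hbf]) (Set.toFinite _),
    Set.ncard_insert_of_notMem (by simp [hcd, hce, hcf]) (Set.toFinite _),
    Set.ncard_insert_of_notMem (by simp [hde, hdf]) (Set.toFinite _),
    Set.ncard_insert_of_notMem (by simp [hef]) (Set.toFinite _),
    Set.ncard_singleton]

lemma lof_lt {x y : L} : (V.lof x : V L K) < .lof y ↔ x < y := by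
  simp [lt_iff_le_not_ge]

lemma lof_inj : Function.Injective (V.lof : L → V L K) := by
  intro a b h; injection h

/-- generic spanning N₆ quadruple builder. -/
lemma genSpan {u1 v1 u2 v2 : V L K} (h1 : u1 < v1) (h2 : u2 < v2)
    (hb1 : u1 ≠ .bot) (hb2 : u2 ≠ .bot) (ht1 : v1 ≠ .top) (ht2 : v2 ≠ .top)
    (mvv : v1 ⊓ v2 = .bot) (j12 : u1 ⊔ u2 = .top) :
    IsSpanningN6 u1 v1 u2 v2 := by
  have m12 : u1 ⊓ u2 = .bot := le_antisymm (by rw [← mvv]; exact inf_le_inf h1.le h2.le)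
    (vbot_le _)
  have m1v : u1 ⊓ v2 = .bot := le_antisymm (by rw [← mvv]; exact inf_le_inf h1.le le_rfl)
    (vbot_le _)
  have mv1 : v1 ⊓ u2 = .bot := le_antisymm (by rw [← mvv]; exact inf_le_inf le_rfl h2.le)
    (vbot_le _)
  have jvv : v1 ⊔ v2 = .top := le_antisymm (vle_top _)
    (by rw [← j12]; exact sup_le_sup h1.le h2.le)
  have j1v : u1 ⊔ v2 = .top := le_antisymm (vle_top _)
    (by rw [← j12]; exact sup_le_sup le_rfl h2.le)
  have jv1 : v1 ⊔ u2 = .top := le_antisymm (vle_top _)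
    (by rw [← j12]; exact sup_le_sup h1.le le_rfl)
  have hv1b : v1 ≠ .bot := fun h => hb1 (le_antisymm (h ▸ h1.le) (vbot_le _))
  have hv2b : v2 ≠ .bot := fun h => hb2 (le_antisymm (h ▸ h2.le) (vbot_le _))
  have hu1t : u1 ≠ .top := fun h => h1.ne (le_antisymm h1.le (by rw [h]; exact vle_top _))
  have hu2t : u2 ≠ .top := fun h => h2.ne (le_antisymm h2.le (by rw [h]; exact vle_top _))
  have hbt : (V.bot : V L K) ≠ .top := by simp
  have h12 : u1 ≠ u2 := by
    intro h; rw [← h, inf_idem] at m12; exact hb1 m12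
  have h1v2 : u1 ≠ v2 := by
    intro h; rw [h, inf_idem] at m1v; exact hv2b m1v
  have hv12 : v1 ≠ u2 := by
    intro h; rw [← h, inf_idem] at mv1; exact hv1b mv1
  have hv1v2 : v1 ≠ v2 := by
    intro h; rw [h, inf_idem] at mvv; exact hv2b mvv
  have e1 : u1 ⊔ v1 = v1 := sup_eq_right.2 h1.le
  have e2 : v1 ⊔ u1 = v1 := sup_eq_left.2 h1.le
  have e3 : u2 ⊔ v2 = v2 := sup_eq_right.2 h2.le
  have e4 : v2 ⊔ u2 = v2 := sup_eq_left.2 h2.le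
  have e5 : u2 ⊔ u1 = .top := by rw [sup_comm]; exact j12
  have e6 : v2 ⊔ u1 = .top := by rw [sup_comm]; exact j1v
  have e7 : u2 ⊔ v1 = .top := by rw [sup_comm]; exact jv1
  have e8 : v2 ⊔ v1 = .top := by rw [sup_comm]; exact jvv
  have i1 : u1 ⊓ v1 = u1 := inf_eq_left.2 h1.le
  have i2 : v1 ⊓ u1 = u1 := inf_eq_right.2 h1.le
  have i3 : u2 ⊓ v2 = u2 := inf_eq_left.2 h2.le
  have i4 : v2 ⊓ u2 = u2 := inf_eq_right.2 h2.le
  have i5 : u2 ⊓ u1 = .bot := by rw [inf_comm]; exact m12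
  have i6 : v2 ⊓ u1 = .bot := by rw [inf_comm]; exact m1v
  have i7 : u2 ⊓ v1 = .bot := by rw [inf_comm]; exact mv1
  have i8 : v2 ⊓ v1 = .bot := by rw [inf_comm]; exact mvv
  refine ⟨⟨h1, h2, by rw [m12, mvv], by rw [j12, jvv], ?_, ?_, ?_⟩,
    by rw [mvv]; exact isBot_bot, by rw [j12]; exact isTop_top⟩
  · rw [m12, j12]
    exact ncard_six hb1.symm hv1b.symm hb2.symm hv2b.symm hbt h1.ne h12 h1v2 hu1t
      hv12 hv1v2 ht1 h2.ne hu2t ht2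
  · rw [m12, j12]
    rintro x hx y hy
    simp only [Set.mem_insert_iff, Set.mem_singleton_iff] at hx hy ⊢
    rcases hx with rfl | rfl | rfl | rfl | rfl | rfl <;>
      rcases hy with rfl | rfl | rfl | rfl | rfl | rfl <;>
      simp [e1, e2, e3, e4, e5, e6, e7, e8, j12, j1v, jv1, jvv]
  · rw [m12, j12]
    rintro x hx y hy
    simp only [Set.mem_insert_iff, Set.mem_singleton_iff] at hx hy ⊢
    rcases hx with rfl | rfl | rfl | rfl | rfl | rfl <;>
      rcases hy with rfl | rfl | rfl | rfl | rfl | rfl <;>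
      simp [i1, i2, i3, i4, i5, i6, i7, i8, m12, m1v, mv1, mvv]

lemma N6_swap {α : Type*} [Lattice α] {a b c d : α} (h : IsN6 a b c d) : IsN6 c d a b := by
  obtain ⟨h1, h2, h3, h4, h5, h6, h7⟩ := h
  have hset : ({c ⊓ a, c, d, a, b, c ⊔ a} : Set α) = {a ⊓ c, a, b, c, d, a ⊔ c} := by
    rw [inf_comm, sup_comm]
    ext z
    simp only [Set.mem_insert_iff, Set.mem_singleton_iff]
    tauto
  exact ⟨h2, h1, by rw [inf_comm, h3, inf_comm], by rw [sup_comm, h4, sup_comm],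
    by rw [hset]; exact h5, by rw [hset]; exact h6, by rw [hset]; exact h7⟩

lemma strong_swap {α : Type*} [Lattice α] {a b c d : α} (h : IsStrongN6 a b c d) :
    IsStrongN6 c d a b := by
  obtain ⟨⟨n6, hb, ht⟩, c1, c2, c3, c4⟩ := h
  refine ⟨⟨N6_swap n6, by rw [inf_comm]; exact hb, by rw [sup_comm]; exact ht⟩,
    ?_, ?_, ?_, ?_⟩
  · intro z hz1 hz2
    rw [inf_comm] at hz1
    rw [sup_comm c a]
    exact c2 z hz1 hz2
  · intro z hz1 hz2
    rw [inf_comm] at hz1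
    rw [sup_comm c a]
    exact c1 z hz1 hz2
  · intro z hz1 hz2
    rw [sup_comm c a] at hz2
    rw [inf_comm d b]
    exact c4 z hz1 hz2
  · intro z hz1 hz2
    rw [sup_comm c a] at hz2
    rw [inf_comm d b]
    exact c3 z hz1 hz2

lemma N6_map {a b c d : L} (h : IsN6 a b c d) :
    IsN6 (V.lof a : V L K) (.lof b) (.lof c) (.lof d) := by
  obtain ⟨h1, h2, h3, h4, h5, h6, h7⟩ := h
  have hset : ({V.lof a ⊓ V.lof c, V.lof a, V.lof b, V.lof c, V.lof d,
      V.lof a ⊔ V.lof c} : Set (V L K)) = V.lof '' {a ⊓ c, a, b, c, d, a ⊔ c} := by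
    simp only [Set.image_insert_eq, Set.image_singleton]
    rfl
  refine ⟨lof_lt.2 h1, lof_lt.2 h2, congrArg V.lof h3, congrArg V.lof h4, ?_, ?_, ?_⟩
  · rw [hset, Set.ncard_image_of_injective _ lof_inj]
    exact h5
  · rw [hset]
    rintro x ⟨x', hx', rfl⟩ y ⟨y', hy', rfl⟩
    exact ⟨x' ⊔ y', h6 hx' hy', rfl⟩
  · rw [hset]
    rintro x ⟨x', hx', rfl⟩ y ⟨y', hy', rfl⟩
    exact ⟨x' ⊓ y', h7 hx' hy', rfl⟩

lemma lt_ak_bk (k : K) : (V.ak k : V L K) < .bk k := by simp [lt_iff_le_not_ge]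

lemma lt_td_te : (V.td : V L K) < .te := by simp [lt_iff_le_not_ge]

/-- strong N₆: an old covering pair against a new `K`-pair. -/
lemma strong_lof_blk {x y : L} (hxy : x < y) (k : K) :
    IsStrongN6 (V.lof x : V L K) (.lof y) (.ak k) (.bk k) := by
  have hspan : IsSpanningN6 (V.lof x : V L K) (.lof y) (.ak k) (.bk k) :=
    genSpan (lof_lt.2 hxy) (lt_ak_bk k) (by simp) (by simp) (by simp) (by simp) rfl rfl
  refine ⟨hspan, ?_, ?_, ?_, ?_⟩
  · intro z hz1 hz2
    cases z with
    | bot => exact absurd hz1 (lt_irrefl _)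
    | lof w => rfl
    | _ => simp at hz2
  · intro z hz1 hz2
    cases z with
    | bot => exact absurd hz1 (lt_irrefl _)
    | ak k' => rfl
    | bk k' => rfl
    | _ => simp at hz2
  · intro z hz1 hz2
    cases z with
    | top => exact absurd hz2 (lt_irrefl _)
    | lof w => rfl
    | _ => simp at hz1
  · intro z hz1 hz2
    cases z with
    | top => exact absurd hz2 (lt_irrefl _)
    | ak k' => rfl
    | bk k' => rfl
    | _ => simp at hz1

/-- strong N₆: two distinct new `K`-pairs. -/
lemma strong_blk_blk {k k' : K} (hkk : k ≠ k') :
    IsStrongN6 (V.ak k : V L K) (.bk k) (.ak k') (.bk k') := by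
  have hm : (V.bk k : V L K) ⊓ .bk k' = .bot := by simp [hkk]
  have hj : (V.ak k : V L K) ⊔ .ak k' = .top := by simp [hkk]
  have hspan : IsSpanningN6 (V.ak k : V L K) (.bk k) (.ak k') (.bk k') :=
    genSpan (lt_ak_bk k) (lt_ak_bk k') (by simp) (by simp) (by simp) (by simp) hm hj
  refine ⟨hspan, ?_, ?_, ?_, ?_⟩
  · intro z hz1 hz2
    rw [hm] at hz1
    rw [hj]
    cases z with
    | bot => exact absurd hz1 (lt_irrefl _)
    | ak k2 =>
      simp only [ile_ak_bk] at hz2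
      subst hz2
      simp [hkk]
    | bk k2 =>
      simp only [ile_bk_bk] at hz2
      subst hz2
      simp [hkk]
    | _ => simp at hz2
  · intro z hz1 hz2
    rw [hm] at hz1
    rw [hj]
    cases z with
    | bot => exact absurd hz1 (lt_irrefl _)
    | ak k2 =>
      simp only [ile_ak_bk] at hz2
      subst hz2
      simp [Ne.symm hkk]
    | bk k2 =>
      simp only [ile_bk_bk] at hz2
      subst hz2
      simp [Ne.symm hkk]
    | _ => simp at hz2
  · intro z hz1 hz2
    rw [hj] at hz2
    rw [hm]
    cases z with
    | top => exact absurd hz2 (lt_irrefl _)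
    | ak k2 =>
      simp only [ile_ak_ak] at hz1
      subst hz1
      simp [hkk]
    | bk k2 =>
      simp only [ile_ak_bk] at hz1
      subst hz1
      simp [hkk]
    | _ => simp at hz1
  · intro z hz1 hz2
    rw [hj] at hz2
    rw [hm]
    cases z with
    | top => exact absurd hz2 (lt_irrefl _)
    | ak k2 =>
      simp only [ile_ak_ak] at hz1
      subst hz1
      simp [Ne.symm hkk]
    | bk k2 =>
      simp only [ile_ak_bk] at hz1
      subst hz1
      simp [Ne.symm hkk]
    | _ => simp at hz1

/-- strong N₆: an old covering pair against the top pair `(td, te)`. -/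
lemma strong_lof_t {x y : L} (hxy : x < y) :
    IsStrongN6 (V.lof x : V L K) (.lof y) .td .te := by
  have hspan : IsSpanningN6 (V.lof x : V L K) (.lof y) .td .te :=
    genSpan (lof_lt.2 hxy) lt_td_te (by simp) (by simp) (by simp) (by simp) rfl rfl
  refine ⟨hspan, ?_, ?_, ?_, ?_⟩
  · intro z hz1 hz2
    cases z with
    | bot => exact absurd hz1 (lt_irrefl _)
    | lof w => rfl
    | _ => simp at hz2
  · intro z hz1 hz2
    cases z with
    | bot => exact absurd hz1 (lt_irrefl _)
    | td => rfl
    | te => rfl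
    | tc => rfl
    | _ => simp at hz2
  · intro z hz1 hz2
    cases z with
    | top => exact absurd hz2 (lt_irrefl _)
    | lof w => rfl
    | _ => simp at hz1
  · intro z hz1 hz2
    cases z with
    | top => exact absurd hz2 (lt_irrefl _)
    | td => rfl
    | te => rfl
    | _ => simp at hz1

/-- strong N₆: a new `K`-pair against the top pair `(td, te)`. -/
lemma strong_blk_t (k : K) :
    IsStrongN6 (V.ak k : V L K) (.bk k) .td .te := by
  have hspan : IsSpanningN6 (V.ak k : V L K) (.bk k) .td .te :=
    genSpan (lt_ak_bk k) lt_td_te (by simp) (by simp) (by simp) (by simp) rfl rfl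
  refine ⟨hspan, ?_, ?_, ?_, ?_⟩
  · intro z hz1 hz2
    cases z with
    | bot => exact absurd hz1 (lt_irrefl _)
    | ak k2 => rfl
    | bk k2 => rfl
    | _ => simp at hz2
  · intro z hz1 hz2
    cases z with
    | bot => exact absurd hz1 (lt_irrefl _)
    | td => rfl
    | te => rfl
    | tc => rfl
    | _ => simp at hz2
  · intro z hz1 hz2
    cases z with
    | top => exact absurd hz2 (lt_irrefl _)
    | ak k2 => rfl
    | bk k2 => rfl
    | _ => simp at hz1
  · intro z hz1 hz2
    cases z with
    | top => exact absurd hz2 (lt_irrefl _)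
    | td => rfl
    | te => rfl
    | _ => simp at hz1


section Build2
variable {H : Type v} (A : AuxStr L H)

lemma zero'_ne_one' : zero' (K := K) A ≠ one' H K := by simp [zero', one']

lemma C2' : ∀ u1 v1 u2 v2 : V L K, u1 ≤ v1 → u2 ≤ v2 →
    (∀ x y, cg u1 v1 x y → cg u2 v2 x y) →
    quoClosure (Rrel (K := K) A) (gam A u1 v1) (gam A u2 v2) := by
  intro u1 v1 u2 v2 h1 h2 hsub
  rw [nu_iff]
  rcases classify A u1 v1 h1 with ⟨x, y, hxy, rfl, rfl⟩ | ⟨k, rfl, rfl⟩ | rfl | ⟨hfull, hg⟩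
  · rcases classify A u2 v2 h2 with ⟨x', y', hxy', rfl, rfl⟩ | ⟨k', rfl, rfl⟩ | rfl |
      ⟨hfull2, hg2⟩
    · -- old ⊆ old
      have hLsub : ∀ a b : L, cg x y a b → cg x' y' a b := by
        intro a b hab
        have hv := hsub _ _ ((cg_lof_iff x y _ _).2 (Or.inl ⟨a, b, rfl, rfl, hab⟩))
        rcases (cg_lof_iff x' y' _ _).1 hv with ⟨a', b', ha, hb, hab'⟩ | heq
        · obtain rfl : a = a' := by injection ha
          obtain rfl : b = b' := by injection hb
          exact hab'
        · obtain rfl : a = b := by injection heq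
          exact cg_rfl _ _ _
      have hν := A.quasi.2.2.2.2 x y x' y' hxy hxy' hLsub
      exact Or.inr (Or.inr (Or.inl ⟨_, _, rfl, rfl, hν⟩))
    · -- old ⊆ pair
      have hv := hsub _ _ (cg_rel _ _)
      rcases (cg_ak_iff k' _ _).1 hv with heq | ⟨h, _⟩ | ⟨h, _⟩
      · obtain rfl : x = y := by injection heq
        rw [show gam A (V.lof x) (V.lof x) = zero' A from gam_refl A _]
        exact Or.inr (Or.inl rfl)
      · exact absurd h (by simp)
      · exact absurd h (by simp)
    · -- old ⊆ diag
      have hv := hsub _ _ (cg_rel _ _)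
      obtain heq := (cg_diag_iff _ _ _).1 hv
      obtain rfl : x = y := by injection heq
      rw [show gam A (V.lof x) (V.lof x) = zero' A from gam_refl A _]
      exact Or.inr (Or.inl rfl)
    · rw [hg2]
      exact Or.inl rfl
  · rcases classify A u2 v2 h2 with ⟨x', y', hxy', rfl, rfl⟩ | ⟨k', rfl, rfl⟩ | rfl |
      ⟨hfull2, hg2⟩
    · -- pair ⊆ old : impossible
      have hv := hsub _ _ (cg_rel _ _)
      rcases (cg_lof_iff x' y' _ _).1 hv with ⟨a', b', ha, hb, hab'⟩ | heq
      · exact absurd ha (by simp)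
      · exact absurd heq (by simp)
    · -- pair ⊆ pair
      have hv := hsub _ _ (cg_rel _ _)
      rcases (cg_ak_iff k' _ _).1 hv with heq | ⟨ha, _⟩ | ⟨ha, _⟩
      · exact absurd heq (by simp)
      · obtain rfl : k = k' := by injection ha
        exact Or.inr (Or.inr (Or.inr rfl))
      · exact absurd ha (by simp)
    · -- pair ⊆ diag : impossible
      have hv := hsub _ _ (cg_rel _ _)
      exact absurd ((cg_diag_iff _ _ _).1 hv) (by simp)
    · rw [hg2]
      exact Or.inl rfl
  · rw [gam_refl A u1]
    exact Or.inr (Or.inl rfl)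
  · rcases classify A u2 v2 h2 with ⟨x', y', hxy', rfl, rfl⟩ | ⟨k', rfl, rfl⟩ | rfl |
      ⟨hfull2, hg2⟩
    · have hv := hsub _ _ (fun r hr h => hfull r hr h .bot .top)
      rcases (cg_lof_iff x' y' _ _).1 hv with ⟨a', b', ha, hb, hab'⟩ | heq
      · exact absurd ha (by simp)
      · exact absurd heq (by simp)
    · have hv := hsub _ _ (fun r hr h => hfull r hr h .bot .top)
      rcases (cg_ak_iff k' _ _).1 hv with heq | ⟨ha, _⟩ | ⟨ha, _⟩
      · exact absurd heq (by simp)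
      · exact absurd ha (by simp)
      · exact absurd ha (by simp)
    · have hv := hsub _ _ (fun r hr h => hfull r hr h .bot .top)
      exact absurd ((cg_diag_iff _ _ _).1 hv) (by simp)
    · rw [hg, hg2]
      exact Or.inl rfl

lemma C1' : ∀ u1 v1 u2 v2 : V L K, u1 ≤ v1 → u2 ≤ v2 →
    quoClosure (Rrel (K := K) A) (gam A u1 v1) (gam A u2 v2) →
    ∀ x y, cg u1 v1 x y → cg u2 v2 x y := by
  intro u1 v1 u2 v2 h1 h2 hnu
  rw [nu_iff] at hnu
  rcases classify A u2 v2 h2 with ⟨x', y', hxy', rfl, rfl⟩ | ⟨k', rfl, rfl⟩ | rfl |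
    ⟨hfull2, hg2⟩
  · -- target old
    rcases classify A u1 v1 h1 with ⟨x, y, hxy, rfl, rfl⟩ | ⟨k, rfl, rfl⟩ | rfl | ⟨hfull, hg⟩
    · rcases hnu with hq | hp | ⟨a0, b0, ha, hb, hν⟩ | hpq
      · exact absurd hq (by simp [gam])
      · obtain hz : A.γ x y = A.zero := by
          simpa [gam, zero'] using hp
        obtain rfl : x = y := A_gamma_zero A hxy hz
        intro a b hab
        obtain rfl := (cg_diag_iff _ _ _).1 hab
        exact cg_rfl _ _ _
      · obtain rfl : A.γ x y = a0 := by simpa [gam] using ha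
        obtain rfl : A.γ x' y' = b0 := by simpa [gam] using hb
        have hC1 := A.quasi.2.2.2.1 x y x' y' hxy hxy' hν
        intro a b hab
        rcases (cg_lof_iff x y _ _).1 hab with ⟨a1, b1, rfl, rfl, hL⟩ | rfl
        · exact (cg_lof_iff x' y' _ _).2 (Or.inl ⟨a1, b1, rfl, rfl, hC1 _ _ hL⟩)
        · exact cg_rfl _ _ _
      · obtain hz : A.γ x y = A.γ x' y' := by simpa [gam] using hpq
        have hC1 := A.quasi.2.2.2.1 x y x' y' hxy hxy' (hz ▸ A_refl A _)
        intro a b hab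
        rcases (cg_lof_iff x y _ _).1 hab with ⟨a1, b1, rfl, rfl, hL⟩ | rfl
        · exact (cg_lof_iff x' y' _ _).2 (Or.inl ⟨a1, b1, rfl, rfl, hC1 _ _ hL⟩)
        · exact cg_rfl _ _ _
    · rcases hnu with hq | hp | ⟨a0, b0, ha, hb, hν⟩ | hpq
      · exact absurd hq (by simp [gam])
      · exact absurd hp (by simp [gam, zero'])
      · exact absurd ha (by simp [gam])
      · exact absurd hpq (by simp [gam])
    · intro a b hab
      obtain rfl := (cg_diag_iff _ _ _).1 hab
      exact cg_rfl _ _ _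
    · rw [hg] at hnu
      rcases hnu with hq | hp | ⟨a0, b0, ha, hb, hν⟩ | hpq
      · exact absurd hq (by simp [one', gam])
      · exact absurd hp (by simp [one', zero'])
      · exact absurd ha (by simp [one'])
      · exact absurd hpq (by simp [one', gam])
  · -- target pair k'
    rcases classify A u1 v1 h1 with ⟨x, y, hxy, rfl, rfl⟩ | ⟨k, rfl, rfl⟩ | rfl | ⟨hfull, hg⟩
    · rcases hnu with hq | hp | ⟨a0, b0, ha, hb, hν⟩ | hpq
      · exact absurd hq (by simp [one', gam])
      · obtain hz : A.γ x y = A.zero := by simpa [gam, zero'] using hp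
        obtain rfl : x = y := A_gamma_zero A hxy hz
        intro a b hab
        obtain rfl := (cg_diag_iff _ _ _).1 hab
        exact cg_rfl _ _ _
      · exact absurd hb (by simp [gam])
      · exact absurd hpq (by simp [gam])
    · rcases hnu with hq | hp | ⟨a0, b0, ha, hb, hν⟩ | hpq
      · exact absurd hq (by simp [one', gam])
      · exact absurd hp (by simp [gam, zero'])
      · exact absurd ha (by simp [gam])
      · obtain rfl : k = k' := by simpa [gam] using hpq
        exact fun a b hab => hab
    · intro a b hab
      obtain rfl := (cg_diag_iff _ _ _).1 hab
      exact cg_rfl _ _ _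
    · rw [hg] at hnu
      rcases hnu with hq | hp | ⟨a0, b0, ha, hb, hν⟩ | hpq
      · exact absurd hq (by simp [one', gam])
      · exact absurd hp (by simp [one', zero'])
      · exact absurd ha (by simp [one'])
      · exact absurd hpq (by simp [one', gam])
  · -- target diag
    rw [gam_refl A u2] at hnu
    rcases classify A u1 v1 h1 with ⟨x, y, hxy, rfl, rfl⟩ | ⟨k, rfl, rfl⟩ | rfl | ⟨hfull, hg⟩
    · rcases hnu with hq | hp | ⟨a0, b0, ha, hb, hν⟩ | hpq
      · exact absurd hq (by simp [one', zero'])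
      · obtain hz : A.γ x y = A.zero := by simpa [gam, zero'] using hp
        obtain rfl : x = y := A_gamma_zero A hxy hz
        intro a b hab
        obtain rfl := (cg_diag_iff _ _ _).1 hab
        exact cg_rfl _ _ _
      · obtain rfl : A.γ x y = a0 := by simpa [gam] using ha
        have hb0 : b0 = A.zero := by simpa [zero'] using hb.symm
        subst hb0
        obtain rfl : x = y := A_gamma_zero A hxy (A_nu_zero A hν)
        intro a b hab
        obtain rfl := (cg_diag_iff _ _ _).1 hab
        exact cg_rfl _ _ _
      · obtain hz : A.γ x y = A.zero := by simpa [gam, zero'] using hpq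
        obtain rfl : x = y := A_gamma_zero A hxy hz
        intro a b hab
        obtain rfl := (cg_diag_iff _ _ _).1 hab
        exact cg_rfl _ _ _
    · rcases hnu with hq | hp | ⟨a0, b0, ha, hb, hν⟩ | hpq
      · exact absurd hq (by simp [one', zero'])
      · exact absurd hp (by simp [gam, zero'])
      · exact absurd ha (by simp [gam])
      · exact absurd hpq (by simp [gam, zero'])
    · intro a b hab
      obtain rfl := (cg_diag_iff _ _ _).1 hab
      exact cg_rfl _ _ _
    · rw [hg] at hnu
      rcases hnu with hq | hp | ⟨a0, b0, ha, hb, hν⟩ | hpq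
      · exact absurd hq (by simp [one', zero'])
      · exact absurd hp (by simp [one', zero'])
      · exact absurd ha (by simp [one'])
      · exact absurd hpq (by simp [one', zero'])
  · -- target full
    intro a b hab
    exact fun r hr h => hfull2 r hr h a b

end Build2


section Build3
variable {H : Type v} (A : AuxStr L H)

lemma quo_refl {α : Type*} (R : α → α → Prop) : Reflexive (quoClosure R) :=
  fun p _ h _ _ => h p

lemma quo_trans {α : Type*} (R : α → α → Prop) : Transitive (quoClosure R) :=
  fun _ _ _ hpq hqr μ h1 h2 h3 => h2 (hpq μ h1 h2 h3) (hqr μ h1 h2 h3)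

lemma A_dle (h : H) : A.δ h ≤ A.ε h := by
  by_cases h0 : h = A.zero
  · subst h0; exact le_of_eq A.delta_zero
  · exact (A.delta_covby h h0).le

lemma nu'_zero (x : (H ⊕ K) ⊕ Unit) : quoClosure (Rrel (K := K) A) (zero' A) x :=
  (nu_iff A _ _).2 (Or.inr (Or.inl rfl))

lemma nu'_one (x : (H ⊕ K) ⊕ Unit) : quoClosure (Rrel (K := K) A) x (one' H K) :=
  (nu_iff A _ _).2 (Or.inl rfl)

lemma surj' : ∀ h' : (H ⊕ K) ⊕ Unit, ∃ u v : V L K, u ≤ v ∧ gam A u v = h' := by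
  rintro ((h | k) | u)
  · exact ⟨.lof (A.δ h), .lof (A.ε h), by simp [A_dle A h], by simp [gam, A.gamma_delta]⟩
  · exact ⟨.ak k, .bk k, by simp, rfl⟩
  · cases u
    exact ⟨.td, .te, by simp, rfl⟩

/-- the extended auxiliary structure. -/
noncomputable def Bstr : AuxStr (V L K) ((H ⊕ K) ⊕ Unit) where
  γ := gam A
  ν := quoClosure (Rrel (K := K) A)
  δ := del A
  ε := eps A
  zero := zero' A
  quasi := ⟨quo_refl _, quo_trans _, surj' A, C1' A, C2' A⟩
  zero_least := nu'_zero A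
  least_unique := by
    intro z hz
    have h := (nu_iff A _ _).1 (hz (zero' A))
    rcases h with hq | hp | ⟨a, b, rfl, hb, hν⟩ | rfl
    · exact absurd hq (by simp [zero', one'])
    · exact hp
    · obtain rfl : A.zero = b := by simpa [zero'] using hb
      rw [show a = A.zero from A_nu_zero A hν]
      rfl
    · rfl
  greatest_unique := by
    intro g1 g2 h1 h2
    have e1 := (nu_iff A _ _).1 (h1 (one' H K))
    have e2 := (nu_iff A _ _).1 (h2 (one' H K))
    rcases e1 with hq | hp | ⟨a, b, ha, hb, hν⟩ | rfl
    · rcases e2 with hq' | hp' | ⟨a', b', ha', hb', hν'⟩ | rfl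
      · rw [hq, hq']
      · exact absurd hp' (by simp [zero', one'])
      · exact absurd ha' (by simp [one'])
      · rw [hq]; rfl
    · exact absurd hp (by simp [zero', one'])
    · exact absurd ha (by simp [one'])
    · rcases e2 with hq' | hp' | ⟨a', b', ha', hb', hν'⟩ | rfl
      · rw [hq']; rfl
      · exact absurd hp' (by simp [zero', one'])
      · exact absurd ha' (by simp [one'])
      · rfl
  delta_zero := by
    show V.lof (A.δ A.zero) = V.lof (A.ε A.zero)
    rw [A.delta_zero]
  delta_covby := by
    rintro ((h | k) | u) hp
    · have hh : h ≠ A.zero := by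
        intro e; exact hp (by rw [e]; rfl)
      have hcov := A.delta_covby h hh
      show (V.lof (A.δ h) : V L K) ⋖ .lof (A.ε h)
      refine ⟨lof_lt.2 hcov.lt, ?_⟩
      intro z hz1 hz2
      cases z with
      | lof w => exact hcov.2 (lof_lt.1 hz1) (lof_lt.1 hz2)
      | top =>
        have := hz2.le
        simp at this
      | _ =>
        have := hz1.le
        simp at this
    · show (V.ak k : V L K) ⋖ .bk k
      refine ⟨lt_ak_bk k, ?_⟩
      intro z hz1 hz2
      cases z with
      | ak k2 =>
        have := hz1.le
        simp only [ile_ak_ak] at this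
        subst this
        exact lt_irrefl _ hz1
      | bk k2 =>
        have := hz2.le
        simp only [ile_bk_bk] at this
        subst this
        exact lt_irrefl _ hz2
      | top =>
        have := hz2.le
        simp at this
      | _ =>
        have := hz1.le
        simp at this
    · cases u
      show (V.td : V L K) ⋖ .te
      refine ⟨lt_td_te, ?_⟩
      intro z hz1 hz2
      cases z with
      | td => exact lt_irrefl _ hz1
      | te => exact lt_irrefl _ hz2
      | top =>
        have := hz2.le
        simp at this
      | _ =>
        have := hz1.le
        simp at this
  gamma_delta := by
    rintro ((h | k) | u)
    · show gam A (.lof (A.δ h)) (.lof (A.ε h)) = _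
      simp [gam, A.gamma_delta]
    · rfl
    · cases u; rfl
  n6 := by
    rintro ((h | k) | u) ((h' | k') | u') hp hq hpq
    · have hh : h ≠ A.zero := fun e => hp (by rw [e]; rfl)
      have hh' : h' ≠ A.zero := fun e => hq (by rw [e]; rfl)
      have hne : h ≠ h' := fun e => hpq (by rw [e])
      exact N6_map (A.n6 h h' hh hh' hne)
    · have hh : h ≠ A.zero := fun e => hp (by rw [e]; rfl)
      exact (strong_lof_blk (A.delta_covby h hh).lt k').1.1
    · cases u'
      have hh : h ≠ A.zero := fun e => hp (by rw [e]; rfl)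
      exact (strong_lof_t (A.delta_covby h hh).lt).1.1
    · have hh' : h' ≠ A.zero := fun e => hq (by rw [e]; rfl)
      exact N6_swap (strong_lof_blk (A.delta_covby h' hh').lt k).1.1
    · have hkk : k ≠ k' := fun e => hpq (by rw [e])
      exact (strong_blk_blk hkk).1.1
    · cases u'
      exact (strong_blk_t k).1.1
    · cases u
      have hh' : h' ≠ A.zero := fun e => hq (by rw [e]; rfl)
      exact N6_swap (strong_lof_t (A.delta_covby h' hh').lt).1.1
    · cases u
      exact N6_swap (strong_blk_t k').1.1
    · cases u; cases u'
      exact absurd rfl hpq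
  strong := by
    rintro ((h | k) | u) ((h' | k') | u') hnpq hnqp hspan
    · -- old-old : spanning impossible
      exfalso
      have hb := hspan.2.1 (.bot : V L K)
      have hb' : (V.lof (A.ε h ⊓ A.ε h') : V L K) ≤ .bot := hb
      simp at hb'
    · by_cases h0 : h = A.zero
      · subst h0; exact absurd (nu'_zero A _) hnpq
      · exact strong_lof_blk (A.delta_covby h h0).lt k'
    · exact absurd (nu'_one A _) hnpq
    · by_cases h0 : h' = A.zero
      · subst h0; exact absurd (nu'_zero A _) hnqp
      · exact strong_swap (strong_lof_blk (A.delta_covby h' h0).lt k)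
    · by_cases hkk : k = k'
      · subst hkk; exact absurd (quo_refl _ _) hnpq
      · exact strong_blk_blk hkk
    · exact absurd (nu'_one A _) hnpq
    · exact absurd (nu'_one A _) hnqp
    · exact absurd (nu'_one A _) hnqp
    · exact absurd (nu'_one A _) hnqp
  atoms3 := by
    intro bt tp hbt htp hne
    obtain rfl : bt = .bot := le_antisymm (hbt _) (vbot_le _)
    obtain rfl : tp = .top := le_antisymm (vle_top _) (htp _)
    have hcovb : ∀ i : Fin 3, (V.bot : V L K) ⋖ .mid i := by
      intro i
      refine ⟨by simp [lt_iff_le_not_ge], ?_⟩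
      intro z hz1 hz2
      cases z with
      | bot => exact lt_irrefl _ hz1
      | mid j =>
        have := hz2.le
        simp only [ile_mid_mid] at this
        subst this
        exact lt_irrefl _ hz2
      | _ =>
        have := hz2.le
        simp at this
    have hcovt : ∀ i : Fin 3, (V.mid i : V L K) ⋖ .top := by
      intro i
      refine ⟨by simp [lt_iff_le_not_ge], ?_⟩
      intro z hz1 hz2
      cases z with
      | top => exact lt_irrefl _ hz2
      | mid j =>
        have := hz1.le
        simp only [ile_mid_mid] at this
        subst this
        exact lt_irrefl _ hz1
      | _ =>
        have := hz1.le
        simp at this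
    have hcompl : ∀ i : Fin 3, ∀ y : V L K, y ≠ .bot → y ≠ .top → y ≠ .mid i →
        (.mid i : V L K) ⊓ y = .bot ∧ (.mid i : V L K) ⊔ y = .top := by
      intro i y hy1 hy2 hy3
      cases y with
      | bot => exact absurd rfl hy1
      | top => exact absurd rfl hy2
      | mid j =>
        have hij : i ≠ j := fun e => hy3 (by rw [e])
        constructor <;> simp [hij]
      | _ => exact ⟨rfl, rfl⟩
    refine ⟨.mid 0, .mid 1, .mid 2, by simp, by simp, by simp, ?_⟩
    intro x hx
    rcases hx with rfl | rfl | rfl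
    · exact ⟨hcovb 0, hcovt 0, fun y h1 h2 h3 => hcompl 0 y h1 h2 h3⟩
    · exact ⟨hcovb 1, hcovt 1, fun y h1 h2 h3 => hcompl 1 y h1 h2 h3⟩
    · exact ⟨hcovb 2, hcovt 2, fun y h1 h2 h3 => hcompl 2 y h1 h2 h3⟩
  notfull := by
    intro one hone hex
    obtain rfl : one = one' H K := by
      have := (nu_iff A _ _).1 (hone (one' H K))
      rcases this with hq | hp | ⟨a, b, ha, hb, hν⟩ | rfl
      · exact hq
      · exact absurd hp (by simp [zero', one'])
      · exact absurd ha (by simp [one'])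
      · rfl
    refine ⟨.td, .te, ?_⟩
    intro hcg
    have hth := hcg Th Th_latcon ?_
    · simp [Th] at hth
    · rintro ⟨w1, w2⟩ ⟨p, hp, hw⟩
      obtain ⟨rfl, rfl⟩ : w1 = del A p ∧ w2 = eps A p := by
        constructor <;> simp [Prod.ext_iff] at hw <;> tauto
      rcases p with (h | k) | u
      · exact Or.inr (Or.inl ⟨A.δ h, A.ε h, rfl, rfl⟩)
      · exact Or.inr (Or.inr ⟨k, Or.inl rfl, Or.inr rfl⟩)
      · cases u; exact absurd rfl hp

/-- the substructure embedding. -/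
noncomputable def subB : AuxSub A (Bstr (K := K) A) where
  f := V.lof
  g := fun h => Sum.inl (Sum.inl h)
  f_inj := lof_inj
  g_inj := by intro a b h; simpa using h
  f_inf := fun x y => rfl
  f_sup := fun x y => rfl
  g_zero := rfl
  nu_mono := fun x y h => (nu_iff A _ _).2 (Or.inr (Or.inr (Or.inl ⟨x, y, rfl, rfl, h⟩)))
  gamma_comm := fun x y _ => rfl
  delta_comm := fun p => rfl
  eps_comm := fun p => rfl

open scoped Classical in
noncomputable def enc : V L K → (L ⊕ K ⊕ K) ⊕ (Fin 3 ⊕ Fin 5)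
  | .lof x => .inl (.inl x)
  | .ak k => .inl (.inr (.inl k))
  | .bk k => .inl (.inr (.inr k))
  | .mid i => .inr (.inl i)
  | .bot => .inr (.inr 0)
  | .top => .inr (.inr 1)
  | .tc => .inr (.inr 2)
  | .td => .inr (.inr 3)
  | .te => .inr (.inr 4)

lemma enc_inj : Function.Injective (enc : V L K → _) := by
  intro a b h
  cases a <;> cases b <;> simp_all [enc] <;> omega

end Build3

-- MORE2
end V
end Stmt15

/-- Vertical extension (Lemma 2.4): every auxiliary structure extends, for any set `K`,
to an auxiliary structure on the color set `H ⊎ K ⊎ {1}`, with the generated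
quasiorder, preserving countability, and new incomparable colors give strong
N₆-quadruples. -/
theorem stmt15 {L : Type u} {H : Type v} {K : Type w} [Lattice L] (A : AuxStr L H) :
    ∃ (L' : Type (max u w)) (_ : Lattice L') (B : AuxStr L' ((H ⊕ K) ⊕ Unit))
      (sub : AuxSub A B),
      sub.g = (fun h : H => Sum.inl (Sum.inl h)) ∧
      B.ν = quoClosure (fun x y : (H ⊕ K) ⊕ Unit =>
        (∃ a b : H, A.ν a b ∧ x = Sum.inl (Sum.inl a) ∧ y = Sum.inl (Sum.inl b)) ∨
        x = Sum.inl (Sum.inl A.zero) ∨ y = Sum.inr ()) ∧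
      (Countable L → Countable H → Countable K → Countable L') ∧
      (∀ p q : (H ⊕ K) ⊕ Unit,
        ¬ ((∃ a : H, p = Sum.inl (Sum.inl a)) ∧ (∃ a : H, q = Sum.inl (Sum.inl a))) →
        ¬ B.ν p q → ¬ B.ν q p →
        IsStrongN6 (B.δ p) (B.ε p) (B.δ q) (B.ε q)) := by
  refine ⟨Stmt15.V L K, inferInstance, Stmt15.V.Bstr A, Stmt15.V.subB A, rfl, rfl, ?_, ?_⟩
  · intro hL _hH hK
    exact Stmt15.V.enc_inj.countable
  · rintro ((h | k) | u) ((h' | k') | u') hno hnpq hnqp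
    · exact absurd ⟨⟨h, rfl⟩, ⟨h', rfl⟩⟩ hno
    · by_cases h0 : h = A.zero
      · subst h0; exact absurd (Stmt15.V.nu'_zero A _) hnpq
      · exact Stmt15.V.strong_lof_blk (A.delta_covby h h0).lt k'
    · exact absurd (Stmt15.V.nu'_one A _) hnpq
    · by_cases h0 : h' = A.zero
      · subst h0; exact absurd (Stmt15.V.nu'_zero A _) hnqp
      · exact Stmt15.V.strong_swap (Stmt15.V.strong_lof_blk (A.delta_covby h' h0).lt k)
    · by_cases hkk : k = k'
      · subst hkk; exact absurd (Stmt15.V.quo_refl _ _) hnpq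
      · exact Stmt15.V.strong_blk_blk hkk
    · exact absurd (Stmt15.V.nu'_one A _) hnpq
    · exact absurd (Stmt15.V.nu'_one A _) hnqp
    · exact absurd (Stmt15.V.nu'_one A _) hnqp
    · exact absurd (Stmt15.V.nu'_one A _) hnqp
end
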